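/- arXiv:2102.00770 — 4 statements merged into one kernel-verified Lean document; each statement's English description precedes it below -/
import Mathlib

section
/- Let e ≥ 2 and 0 < a < b ≤ c ≤ d ≤ e, and let B be the block of e-weight 4 with notation ⟨4^a, 7^{b−a}, 6^{c−b}, 5^{d−c}, 4^{e−d}⟩, which forms a [4:3]-pair via the residue j carried by runner a. Then the unique partition lying in B that is exceptional for this pair is ⟨a_{(1,1,1,1)}⟩. -/
/-- A partition: a weakly decreasing function `parts : ℕ → ℕ` (0-indexed),
having exactly `len` nonzero parts. -/
structure AbacusPartition where
  parts : ℕ → ℕ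
  antitone : Antitone parts
  len : ℕ
  pos_of_lt : ∀ i, i < len → 0 < parts i
  zero_of_ge : ∀ i, len ≤ i → parts i = 0

/-- The beta-set (abacus display) of a partition with `r` beads:
positions `λ_i + r - i` for `1 ≤ i ≤ r` (0-indexed: `parts i + (r - 1 - i)`). -/
def AbacusPartition.betaSet (lam : AbacusPartition) (r : ℕ) : Finset ℕ :=
  (Finset.range r).image (fun i => lam.parts i + (r - 1 - i))

/-- e-weight of the bead at position `p` of the display `B`: the number of
unoccupied positions `q < p` with `q ≡ p (mod e)`. -/
def beadWeight (e : ℕ) (B : Finset ℕ) (p : ℕ) : ℕ :=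
  ((Finset.range p).filter (fun q => q % e = p % e ∧ q ∉ B)).card

/-- Total e-weight of the display `B`. -/
def abacusWeight (e : ℕ) (B : Finset ℕ) : ℕ :=
  B.sum (fun p => beadWeight e B p)

/-- e-weight of a partition (computed from the display with `lam.len` beads). -/
def eWeight (e : ℕ) (lam : AbacusPartition) : ℕ :=
  abacusWeight e (lam.betaSet lam.len)

/-- Positions on runner `res` (positions `p` with `p % e = res`), in increasing
order, up to a bound strictly beyond every bead. -/
def posList (e : ℕ) (B : Finset ℕ) (res : ℕ) : List ℕ :=
  (List.range (B.sup id + e + 2)).filter (fun p => p % e == res)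

/-- One step of the signature-reduction automaton; the state is
`(list of surviving '+' positions, stack of pending '−' positions)`.
A '−' occurs at `p` when `p` is occupied and its preceding position unoccupied
(position `-1` counts as occupied); a '+' occurs at `p` when `p` is unoccupied
and its preceding position occupied.  A '+' cancels the most recent pending '−'. -/
def signStep (B : Finset ℕ) (st : List ℕ × List ℕ) (p : ℕ) : List ℕ × List ℕ :=
  if p ∈ B ∧ ¬(p = 0 ∨ p - 1 ∈ B) then (st.1, p :: st.2)
  else if p ∉ B ∧ (p = 0 ∨ p - 1 ∈ B) then
    (match st.2 with
     | [] => (p :: st.1, ([] : List ℕ))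
     | _ :: tl => (st.1, tl))
  else st

/-- Final state of the reduction of the `j`-signature on runner `res`:
`(surviving '+' (conormal) positions, surviving '−' (normal) positions)`,
each list in decreasing order of position. -/
def signState (e : ℕ) (B : Finset ℕ) (res : ℕ) : List ℕ × List ℕ :=
  (posList e B res).foldl (signStep B) ([], [])

/-- Positions of the normal beads on runner `res`, in decreasing order. -/
def normalList (e : ℕ) (B : Finset ℕ) (res : ℕ) : List ℕ := (signState e B res).2

/-- The conormal positions on runner `res`, in decreasing order. -/
def conormalList (e : ℕ) (B : Finset ℕ) (res : ℕ) : List ℕ := (signState e B res).1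

/-- ε: the number of normal beads on runner `res`. -/
def epsB (e : ℕ) (B : Finset ℕ) (res : ℕ) : ℕ := (normalList e B res).length

/-- φ: the number of conormal positions on runner `res`. -/
def phiB (e : ℕ) (B : Finset ℕ) (res : ℕ) : ℕ := (conormalList e B res).length

/-- ε_j of a partition: in the display with `lam.len` beads, residue `j`
is carried by runner `(j + lam.len) % e`. -/
def epsP (e : ℕ) (lam : AbacusPartition) (j : ℕ) : ℕ :=
  epsB e (lam.betaSet lam.len) ((j + lam.len) % e)

/-- φ_j of a partition. -/
def phiP (e : ℕ) (lam : AbacusPartition) (j : ℕ) : ℕ :=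
  phiB e (lam.betaSet lam.len) ((j + lam.len) % e)

/-- Move each bead in `ps` from its position `p` to `p - 1`. -/
def moveDown (B : Finset ℕ) (ps : List ℕ) : Finset ℕ :=
  ps.foldl (fun C p => insert (p - 1) (C.erase p)) B

/-- For each position `p` in `ps`, move the bead at `p - 1` to `p`. -/
def moveUp (B : Finset ℕ) (ps : List ℕ) : Finset ℕ :=
  ps.foldl (fun C p => insert p (C.erase (p - 1))) B

/-- Ẽ^t on displays: move the `t` normal beads at the smallest positions down. -/
def Etil (e : ℕ) (B : Finset ℕ) (res t : ℕ) : Finset ℕ :=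
  moveDown B ((normalList e B res).reverse.take t)

/-- F̃^t on displays: for the `t` largest conormal positions `p`,
move the bead at `p - 1` to `p`. -/
def Ftil (e : ℕ) (B : Finset ℕ) (res t : ℕ) : Finset ℕ :=
  moveUp B ((conormalList e B res).take t)

/-- Number of beads of `B` on runner `i`. -/
def runnerCount (e : ℕ) (B : Finset ℕ) (i : ℕ) : ℕ :=
  (B.filter (fun p => p % e = i)).card

/-- Sum of the e-weights of the beads of `B` on runner `i` (this is `|λ(i)|`). -/
def runnerWeight (e : ℕ) (B : Finset ℕ) (i : ℕ) : ℕ :=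
  (B.filter (fun p => p % e = i)).sum (beadWeight e B)

/-- The display of the e-core: slide every bead as far up its runner as possible. -/
def coreBeta (e : ℕ) (B : Finset ℕ) : Finset ℕ :=
  (Finset.range e).biUnion
    (fun i => (Finset.range (runnerCount e B i)).image (fun m => i + m * e))

/-- `lam` lies in the block with bead counts `bd 0, …, bd (e-1)` and e-weight `w`:
displayed with `r = bd 0 + ⋯ + bd (e-1)` beads it has `bd i` beads on runner `i`
and e-weight `w`. -/
def inBlock (e : ℕ) (bd : ℕ → ℕ) (w : ℕ) (lam : AbacusPartition) : Prop :=
  lam.len ≤ (Finset.range e).sum bd ∧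
  (∀ i < e, runnerCount e (lam.betaSet ((Finset.range e).sum bd)) i = bd i) ∧
  abacusWeight e (lam.betaSet ((Finset.range e).sum bd)) = w

/-- The single-runner beta-set of the partition with parts `ρ` and `c` beads. -/
def oneRunnerBeta (rho : List ℕ) (c : ℕ) : Finset ℕ :=
  (Finset.range c).image (fun t => rho.getD t 0 + (c - 1 - t))

/-- The display of the partition `⟨0_{lamOf 0}, …, (e−1)_{lamOf (e−1)} | bd 0, …, bd (e−1)⟩`. -/
def display (e : ℕ) (bd : ℕ → ℕ) (lamOf : ℕ → List ℕ) : Finset ℕ :=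
  (Finset.range e).biUnion
    (fun i => (oneRunnerBeta (lamOf i) (bd i)).image (fun m => i + m * e))

/-- The operator Ḟ at runner `res`: apply F̃^{φ} (valid when ε = 0 < φ). -/
def dotF (e : ℕ) (B : Finset ℕ) (res : ℕ) : Finset ℕ := Ftil e B res (phiB e B res)

/-- Apply a chain of Ḟ steps. -/
def chainFold (e : ℕ) : Finset ℕ → List ℕ → Finset ℕ
  | B, [] => B
  | B, i :: rest => chainFold e (dotF e B i) rest

/-- The chain of Ḟ steps is semisimple: at each step ε = 0 before, φ > 0 before,
and φ = 0 afterwards. -/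
def validChain (e : ℕ) : Finset ℕ → List ℕ → Prop
  | _, [] => True
  | B, i :: rest =>
      (epsB e B i = 0 ∧ 0 < phiB e B i ∧ phiB e (dotF e B i) i = 0) ∧
      validChain e (dotF e B i) rest

/-- `B` induces semisimply to `C` (displays with the same number of beads). -/
def InducesSS (e : ℕ) (B C : Finset ℕ) : Prop :=
  ∃ L : List ℕ, validChain e B L ∧ chainFold e B L = C

/-- Re-display a beta-set with `s` additional beads. -/
def shiftBeta (B : Finset ℕ) (s : ℕ) : Finset ℕ :=
  B.image (· + s) ∪ Finset.range s

/-- `B` induces semisimply to the partition displayed by `C` (where `C` may use a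
different number of beads). -/
def InducesToPartition (e : ℕ) (B C : Finset ℕ) : Prop :=
  ∃ D : Finset ℕ, InducesSS e B D ∧ shiftBeta D C.card = shiftBeta C D.card

/-- The block with bead counts `bd` and weight `w` is Rouquier:
for all `i < j < e`, `bd i − bd j ≥ w` or `bd j − bd i ≥ w − 1`. -/
def IsRouquier (e w : ℕ) (bd : ℕ → ℕ) : Prop :=
  ∀ i j, i < j → j < e → bd j + w ≤ bd i ∨ bd i + (w - 1) ≤ bd j

/-- `lam` is e-singular: it has `e` consecutive equal nonzero parts. -/
def ESingular (e : ℕ) (lam : AbacusPartition) : Prop :=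
  ∃ i, lam.parts i ≠ 0 ∧ ∀ m < e, lam.parts (i + m) = lam.parts i

/-- `lam` is e-regular. -/
def ERegular (e : ℕ) (lam : AbacusPartition) : Prop := ¬ ESingular e lam

/-- The induced e-sequence of the display `B`, as a multiset: each bead of
positive weight `w` at position `p` contributes `p, p−e, …, p−(w−1)e`. -/
def inducedSeq (e : ℕ) (B : Finset ℕ) : Multiset ℕ :=
  B.val.bind (fun p => (Multiset.range (beadWeight e B p)).map (fun m => p - m * e))

/-- The product order: `lam ≤_P mu` iff they have the same e-core and e-weight and
`s(mu)_r ≥ s(lam)_r` componentwise for all sufficiently large `r`. -/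
def ProdLE (e : ℕ) (lam mu : AbacusPartition) : Prop :=
  (∃ r, lam.len ≤ r ∧ mu.len ≤ r ∧
    coreBeta e (lam.betaSet r) = coreBeta e (mu.betaSet r)) ∧
  eWeight e lam = eWeight e mu ∧
  ∃ r0, ∀ r, r0 ≤ r →
    List.Forall₂ (· ≤ ·) ((inducedSeq e (lam.betaSet r)).sort (· ≤ ·))
      ((inducedSeq e (mu.betaSet r)).sort (· ≤ ·))


open Finset in
lemma sum_inter_range_choose : ∀ n (s : Finset ℕ), s.card = n →
    (∑ m ∈ s, (s ∩ Finset.range m).card = Nat.choose n 2) ∧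
    (Nat.choose n 2 ≤ ∑ m ∈ s, m) ∧ (∑ m ∈ s, m ≤ Nat.choose n 2 → s = Finset.range n) := by
  intro n
  induction n with
  | zero => intro s hs; rw [Finset.card_eq_zero] at hs; subst hs; simp
  | succ k ih =>
    intro s hs
    have hne : s.Nonempty := Finset.card_pos.mp (by omega)
    set M := s.max' hne with hM
    have hMs : M ∈ s := s.max'_mem hne
    have hsub : s.erase M ⊆ Finset.range M := by
      intro x hx
      rcases Finset.mem_erase.mp hx with ⟨hne', hxs⟩
      exact Finset.mem_range.mpr (lt_of_le_of_ne (s.le_max' x hxs) hne')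
    have hce : (s.erase M).card = k := by rw [Finset.card_erase_of_mem hMs, hs]; rfl
    have hkM : k ≤ M := by
      have := Finset.card_le_card hsub
      rwa [hce, Finset.card_range] at this
    obtain ⟨ih1, ih2, ih3⟩ := ih (s.erase M) hce
    have hsplit : ∀ f : ℕ → ℕ, ∑ m ∈ s, f m = f M + ∑ m ∈ s.erase M, f m := by
      intro f; rw [← Finset.add_sum_erase _ f hMs]
    have hint : ∀ m ∈ s.erase M, (s ∩ Finset.range m).card = (s.erase M ∩ Finset.range m).card := by
      intro m hm
      congr 1
      ext x
      simp only [Finset.mem_inter, Finset.mem_erase, Finset.mem_range]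
      constructor
      · rintro ⟨hxs, hxm⟩
        have hmM : m < M := Finset.mem_range.mp (hsub hm)
        exact ⟨⟨by omega, hxs⟩, hxm⟩
      · rintro ⟨⟨_, hxs⟩, hxm⟩; exact ⟨hxs, hxm⟩
    have hintM : s ∩ Finset.range M = s.erase M := by
      ext x
      simp only [Finset.mem_inter, Finset.mem_erase, Finset.mem_range]
      constructor
      · rintro ⟨hxs, hxm⟩; exact ⟨by omega, hxs⟩
      · rintro ⟨hne', hxs⟩; exact ⟨hxs, lt_of_le_of_ne (s.le_max' x hxs) hne'⟩
    have hchoose : Nat.choose (k+1) 2 = Nat.choose k 2 + k := by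
      rw [Nat.choose_succ_succ', Nat.choose_one_right]; exact Nat.add_comm _ _
    constructor
    · rw [hsplit, hintM, Finset.sum_congr rfl hint, ih1, hce, hchoose]; omega
    have hsum : ∑ m ∈ s, m = M + ∑ m ∈ s.erase M, m := hsplit id
    constructor
    · rw [hsum, hchoose]; omega
    · intro hle
      rw [hsum] at hle
      have hM2 : M = k := by omega
      have he2 : s.erase M = Finset.range k := ih3 (by omega)
      ext x
      simp only [Finset.mem_range]
      constructor
      · intro hx
        rcases eq_or_ne x M with rfl | hne'
        · omega
        · have : x ∈ s.erase M := Finset.mem_erase.mpr ⟨hne', hx⟩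
          rw [he2] at this; have := Finset.mem_range.mp this; omega
      · intro hx
        rcases eq_or_ne x M with rfl | hne'
        · exact hMs
        · have : x ∈ Finset.range k := Finset.mem_range.mpr (by omega)
          rw [← he2] at this; exact (Finset.mem_erase.mp this).2


section Machinery
variable (e : ℕ) (B : Finset ℕ)

/-- rows of runner i -/
def rowsOf (i : ℕ) : Finset ℕ := (B.filter (fun p => p % e = i)).image (fun p => p / e)

lemma mem_rowsOf {i : ℕ} (hi : i < e) (m : ℕ) :
    m ∈ rowsOf e B i ↔ i + m * e ∈ B := by
  have he : 0 < e := by omega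
  constructor
  · rintro h
    rcases Finset.mem_image.mp h with ⟨p, hp, hpe⟩
    rcases Finset.mem_filter.mp hp with ⟨hpB, hpm⟩
    have : i + m * e = p := by
      have := Nat.mod_add_div' p e
      rw [← hpe, ← hpm]; omega
    rwa [this]
  · intro h
    apply Finset.mem_image.mpr
    refine ⟨i + m * e, Finset.mem_filter.mpr ⟨h, ?_⟩, ?_⟩
    · rw [Nat.add_mul_mod_self_right, Nat.mod_eq_of_lt hi]
    · rw [Nat.add_mul_div_right _ _ he, Nat.div_eq_of_lt hi, Nat.zero_add]

lemma card_rowsOf (i : ℕ) : (rowsOf e B i).card = runnerCount e B i := by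
  apply Finset.card_image_of_injOn
  intro p hp q hq hpq
  rcases Finset.mem_filter.mp hp with ⟨_, hp2⟩
  rcases Finset.mem_filter.mp hq with ⟨_, hq2⟩
  simp only at hpq
  have h1 := Nat.mod_add_div' p e
  have h2 := Nat.mod_add_div' q e
  rw [hp2, hpq] at h1; rw [hq2] at h2; omega

lemma beadWeight_eq {i : ℕ} (hi : i < e) (m : ℕ) :
    beadWeight e B (i + m * e) = m - ((rowsOf e B i) ∩ Finset.range m).card := by
  have he : 0 < e := by omega
  have hmod : (i + m * e) % e = i := by
    rw [Nat.add_mul_mod_self_right, Nat.mod_eq_of_lt hi]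
  have hset : (Finset.range (i + m * e)).filter (fun q => q % e = (i + m*e) % e ∧ q ∉ B)
      = ((Finset.range m).filter (fun n => i + n * e ∉ B)).image (fun n => i + n * e) := by
    ext q
    simp only [Finset.mem_filter, Finset.mem_range, Finset.mem_image, hmod]
    constructor
    · rintro ⟨hq1, hq2, hq3⟩
      refine ⟨q / e, ⟨?_, ?_⟩, ?_⟩
      · have := Nat.mod_add_div' q e; rw [hq2] at this; nlinarith [Nat.mod_add_div' q e]
      · have hq : i + (q/e) * e = q := by have := Nat.mod_add_div' q e; rw [hq2] at this; omega
        rwa [hq]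
      · have := Nat.mod_add_div' q e; rw [hq2] at this; omega
    · rintro ⟨n, ⟨hn1, hn2⟩, rfl⟩
      refine ⟨?_, ?_, hn2⟩
      · have : n * e < m * e := (Nat.mul_lt_mul_right he).mpr hn1
        omega
      · rw [Nat.add_mul_mod_self_right, Nat.mod_eq_of_lt hi]
  have hinj : Set.InjOn (fun n => i + n * e) ((Finset.range m).filter (fun n => i + n * e ∉ B)) := by
    intro x _ y _ h
    simp only at h
    exact Nat.eq_of_mul_eq_mul_right he (by omega)
  rw [beadWeight, hset, Finset.card_image_of_injOn hinj]
  have hsplit := Finset.card_filter_add_card_filter_not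
    (s := Finset.range m) (p := fun n => i + n * e ∈ B)
  have hin : (Finset.range m).filter (fun n => i + n * e ∈ B) = rowsOf e B i ∩ Finset.range m := by
    ext n
    simp only [Finset.mem_filter, Finset.mem_range, Finset.mem_inter, mem_rowsOf e B hi]
    tauto
  rw [hin] at hsplit
  simp only [Finset.card_range] at hsplit
  omega

lemma runnerWeight_eq {i : ℕ} (hi : i < e) :
    runnerWeight e B i = ∑ m ∈ rowsOf e B i, (m - ((rowsOf e B i) ∩ Finset.range m).card) := by
  have he : 0 < e := by omega
  have hinj : ∀ p ∈ B.filter (fun p => p % e = i), ∀ q ∈ B.filter (fun p => p % e = i),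
      p / e = q / e → p = q := by
    intro p hp q hq hpq
    rcases Finset.mem_filter.mp hp with ⟨_, hp2⟩
    rcases Finset.mem_filter.mp hq with ⟨_, hq2⟩
    have h1 := Nat.mod_add_div' p e
    have h2 := Nat.mod_add_div' q e
    rw [hp2, hpq] at h1; rw [hq2] at h2; omega
  rw [runnerWeight, show rowsOf e B i = (B.filter (fun p => p % e = i)).image (fun p => p / e)
    from rfl, Finset.sum_image hinj]
  apply Finset.sum_congr rfl
  intro p hp
  rcases Finset.mem_filter.mp hp with ⟨_, hp2⟩
  have hp3 : i + (p / e) * e = p := by have := Nat.mod_add_div' p e; rw [hp2] at this; omega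
  calc beadWeight e B p = beadWeight e B (i + (p/e) * e) := by rw [hp3]
  _ = _ := beadWeight_eq e B hi (p/e)

lemma runnerWeight_add_choose {i : ℕ} (hi : i < e) :
    runnerWeight e B i + Nat.choose (runnerCount e B i) 2 = ∑ m ∈ rowsOf e B i, m := by
  rw [runnerWeight_eq e B hi, ← card_rowsOf e B i,
    ← (sum_inter_range_choose (rowsOf e B i).card (rowsOf e B i) rfl).1,
    ← Finset.sum_add_distrib]
  apply Finset.sum_congr rfl
  intro m hm
  have : ((rowsOf e B i) ∩ Finset.range m).card ≤ m := by
    calc _ ≤ (Finset.range m).card := Finset.card_le_card (Finset.inter_subset_right)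
    _ = m := Finset.card_range m
  omega

lemma abacusWeight_eq (he : 0 < e) :
    abacusWeight e B = ∑ i ∈ Finset.range e, runnerWeight e B i := by
  rw [abacusWeight]
  rw [← Finset.sum_fiberwise_of_maps_to (g := fun p => p % e) (t := Finset.range e)
    (fun p _ => Finset.mem_range.mpr (Nat.mod_lt _ he))]
  rfl

lemma mem_iff_rowsOf (he : 0 < e) (p : ℕ) :
    p ∈ B ↔ p / e ∈ rowsOf e B (p % e) := by
  rw [mem_rowsOf e B (Nat.mod_lt _ he), Nat.mod_add_div' p e]

lemma oneRunnerBeta_nil (c : ℕ) : oneRunnerBeta [] c = Finset.range c := by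
  ext x
  simp only [oneRunnerBeta, Finset.mem_image, Finset.mem_range, List.getD_nil]
  constructor
  · rintro ⟨t, ht, rfl⟩; omega
  · intro hx; exact ⟨c - 1 - x, by omega, by omega⟩

lemma mem_display (he : 0 < e) (bd : ℕ → ℕ) (lamOf : ℕ → List ℕ) (p : ℕ) :
    p ∈ display e bd lamOf ↔ p / e ∈ oneRunnerBeta (lamOf (p % e)) (bd (p % e)) := by
  simp only [display, Finset.mem_biUnion, Finset.mem_image, Finset.mem_range]
  constructor
  · rintro ⟨i, hie, m, hm, rfl⟩
    rw [Nat.add_mul_mod_self_right, Nat.mod_eq_of_lt hie,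
      Nat.add_mul_div_right _ _ he, Nat.div_eq_of_lt hie, Nat.zero_add]
    exact hm
  · intro h
    exact ⟨p % e, Nat.mod_lt _ he, p / e, h, Nat.mod_add_div' p e⟩

end Machinery


section Automaton

variable (e a : ℕ) (B : Finset ℕ)

lemma signStep_minus {p : ℕ} (st : List ℕ × List ℕ) (h1 : p ∈ B) (h0 : p ≠ 0)
    (h2 : p - 1 ∉ B) : signStep B st p = (st.1, p :: st.2) := by
  simp [signStep, h1, h0, h2]

lemma signStep_plus {p : ℕ} (st : List ℕ × List ℕ) (h1 : p ∉ B) (h2 : p - 1 ∈ B) :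
    signStep B st p = (match st.2 with
     | [] => (p :: st.1, ([] : List ℕ))
     | _ :: tl => (st.1, tl)) := by
  simp [signStep, h1, h2]

lemma signStep_skip {p : ℕ} (st : List ℕ × List ℕ) (h : p ∈ B ↔ p - 1 ∈ B) (h0 : p ≠ 0) :
    signStep B st p = st := by
  by_cases hp : p ∈ B
  · simp [signStep, hp, h.mp hp]
  · have h2 : p - 1 ∉ B := fun hc => hp (h.mpr hc)
    simp [signStep, hp, h0, h2]

lemma foldl_signStep_neutral : ∀ (L : List ℕ) (st : List ℕ × List ℕ),
    (∀ p ∈ L, (p ∈ B ↔ p - 1 ∈ B) ∧ p ≠ 0) →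
    L.foldl (signStep B) st = st := by
  intro L
  induction L with
  | nil => intro st _; rfl
  | cons p L ih =>
    intro st h
    rw [List.foldl_cons, signStep_skip B st (h p (by simp)).1 (h p (by simp)).2]
    exact ih st (fun q hq => h q (by simp [hq]))

lemma filter_range_mul (he0 : 0 < e) (hae : a < e) :
    ∀ K, (List.range (a + K * e)).filter (fun p => p % e == a) =
      (List.range K).map (fun m => a + m * e) := by
  intro K
  induction K with
  | zero =>
    simp only [Nat.zero_mul, Nat.add_zero, List.range_zero, List.map_nil]
    apply List.filter_eq_nil_iff.mpr
    intro p hp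
    have hpa : p < a := List.mem_range.mp hp
    have : p % e ≤ p := Nat.mod_le p e
    simp only [beq_iff_eq]
    omega
  | succ K ih =>
    have hx : a + (K + 1) * e = (a + K * e) + e := by ring
    rw [hx, List.range_add, List.filter_append, ih, List.filter_map]
    have hsing : (List.range e).filter ((fun p => p % e == a) ∘ (fun j => a + K * e + j)) = [0] := by
      rw [show List.range e = List.range (1 + (e - 1)) by rw [show 1 + (e-1) = e by omega],
        List.range_add, List.filter_append]
      have h0 : (List.range 1).filter ((fun p => p % e == a) ∘ (fun j => a + K * e + j)) = [0] := by
        rw [show List.range 1 = [0] from rfl]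
        simp only [List.filter_cons, List.filter_nil, Function.comp]
        simp [Nat.add_mul_mod_self_right, Nat.mod_eq_of_lt hae]
      have h1 : ((List.range (e-1)).map (1 + ·)).filter
          ((fun p => p % e == a) ∘ (fun j => a + K * e + j)) = [] := by
        apply List.filter_eq_nil_iff.mpr
        intro j hj
        rcases List.mem_map.mp hj with ⟨j', hj', rfl⟩
        have hj'e : j' < e - 1 := List.mem_range.mp hj'
        simp only [Function.comp, beq_iff_eq]
        have hmod : (a + K * e + (1 + j')) % e = (a + (1 + j')) % e := by
          rw [show a + K * e + (1 + j') = a + (1 + j') + K * e by ring,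
            Nat.add_mul_mod_self_right]
        rw [hmod]
        rcases Nat.lt_or_ge (a + (1 + j')) e with hlt | hge
        · rw [Nat.mod_eq_of_lt hlt]; omega
        · rw [Nat.mod_eq_sub_mod hge, Nat.mod_eq_of_lt (by omega)]; omega
      rw [h0, h1, List.append_nil]
    rw [hsing]
    rw [List.range_succ, List.map_append]
    simp

lemma signState_eq_rowFold (he0 : 0 < e) (hae : a < e) :
    signState e B a = (List.range (B.sup id + e + 2)).foldl
      (fun st m => signStep B st (a + m * e)) ([], []) := by
  set n := B.sup id + e + 2 with hn
  have hbig : ∀ p ∈ B, p ≤ B.sup id := fun p hp => Finset.le_sup (f := id) hp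
  have hsplit : a + n * e = n + (a + n * e - n) := by
    have : n ≤ n * e := Nat.le_mul_of_pos_right n he0
    omega
  have hfull := filter_range_mul e a he0 hae n
  rw [hsplit, List.range_add, List.filter_append] at hfull
  have : signState e B a = ((List.range n).filter (fun p => p % e == a)).foldl
      (signStep B) ([], []) := rfl
  rw [this]
  have htail : (((List.range (a + n * e - n)).map (n + ·)).filter
      (fun p => p % e == a)).foldl (signStep B)
      (((List.range n).filter (fun p => p % e == a)).foldl (signStep B) ([], []))
      = ((List.range n).filter (fun p => p % e == a)).foldl (signStep B) ([], []) := by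
    apply foldl_signStep_neutral
    intro p hp
    have hp' := List.mem_filter.mp hp
    rcases List.mem_map.mp hp'.1 with ⟨j, _, rfl⟩
    constructor
    · constructor
      · intro hc; exact absurd (hbig _ hc) (by omega)
      · intro hc; exact absurd (hbig _ hc) (by omega)
    · omega
  conv_rhs => rw [← List.foldl_map]
  rw [← hfull, List.foldl_append, htail]

lemma card_inter_range_succ (s : Finset ℕ) (n : ℕ) :
    (s ∩ Finset.range (n + 1)).card
      = (s ∩ Finset.range n).card + (if n ∈ s then 1 else 0) := by
  rw [Finset.range_add_one]
  by_cases hn : n ∈ s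
  · rw [Finset.inter_insert_of_mem hn, Finset.card_insert_of_notMem (by simp), if_pos hn]
  · rw [Finset.inter_insert_of_notMem hn, if_neg hn]
    simp

lemma sum_shifted (s : Finset ℕ) (k : ℕ) (hk : ∀ x ∈ s, k ≤ x) :
    k * s.card + Nat.choose s.card 2 ≤ ∑ x ∈ s, x ∧
    (∑ x ∈ s, x ≤ k * s.card + Nat.choose s.card 2 →
      s = (Finset.range s.card).image (· + k)) := by
  have hinj : ∀ x ∈ s, ∀ y ∈ s, x - k = y - k → x = y := by
    intro x hx y hy h
    have := hk x hx; have := hk y hy; omega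
  have hcard : (s.image (· - k)).card = s.card := Finset.card_image_of_injOn hinj
  have hsum : ∑ x ∈ s.image (· - k), x = ∑ x ∈ s, (x - k) := Finset.sum_image hinj
  have hsum2 : ∑ x ∈ s, x = (∑ x ∈ s, (x - k)) + k * s.card := by
    have h1 : (∑ x ∈ s, (x - k)) + k * s.card = ∑ x ∈ s, ((x - k) + k) := by
      rw [Finset.sum_add_distrib, Finset.sum_const, smul_eq_mul, mul_comm]
    rw [h1]
    apply Finset.sum_congr rfl
    intro x hx; have := hk x hx; omega
  obtain ⟨h1, _, h3⟩ := sum_inter_range_choose (s.image (· - k)).card (s.image (· - k)) rfl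
  rw [hcard] at *
  constructor
  · rw [hsum2]; rw [hsum] at *; omega
  · intro hle
    have : ∑ x ∈ s.image (· - k), x ≤ Nat.choose s.card 2 := by rw [hsum]; omega
    have him := h3 this
    ext x
    simp only [Finset.mem_image, Finset.mem_range]
    constructor
    · intro hx
      refine ⟨x - k, ?_, ?_⟩
      · have : x - k ∈ s.image (· - k) := Finset.mem_image_of_mem _ hx
        rw [him] at this; exact Finset.mem_range.mp this
      · have := hk x hx; omega
    · rintro ⟨y, hy, rfl⟩
      have : y ∈ s.image (· - k) := by rw [him]; exact Finset.mem_range.mpr hy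
      rcases Finset.mem_image.mp this with ⟨z, hz, hzy⟩
      have := hk z hz
      have : z = y + k := by omega
      rwa [← this]

lemma stack_invariant (e a : ℕ) (B : Finset ℕ) (he0 : 0 < e) (ha1 : 0 < a) (hae : a < e)
    (H : ∀ m, ((rowsOf e B (a-1)) ∩ Finset.range m).card
      ≤ ((rowsOf e B a) ∩ Finset.range m).card) :
    ∀ n, ((List.range n).foldl (fun st m => signStep B st (a + m * e)) ([], [])).2.length
        + ((rowsOf e B (a-1)) ∩ Finset.range n).card
      ≤ ((rowsOf e B a) ∩ Finset.range n).card := by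
  intro n
  induction n with
  | zero => simp
  | succ n ih =>
    rw [List.range_succ, List.foldl_append, List.foldl_cons, List.foldl_nil]
    set st := (List.range n).foldl (fun st m => signStep B st (a + m * e)) ([], []) with hst
    have hSmem : a + n * e ∈ B ↔ n ∈ rowsOf e B a := (mem_rowsOf e B hae n).symm
    have hTmem : (a + n * e) - 1 ∈ B ↔ n ∈ rowsOf e B (a-1) := by
      rw [show a + n * e - 1 = (a-1) + n * e by omega]
      exact (mem_rowsOf e B (by omega) n).symm
    have h0 : a + n * e ≠ 0 := by omega
    rw [card_inter_range_succ, card_inter_range_succ]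
    by_cases hS : n ∈ rowsOf e B a <;> by_cases hT : n ∈ rowsOf e B (a-1)
    · rw [signStep_skip B st (by rw [hSmem, hTmem]; tauto) h0, if_pos hS, if_pos hT]
      omega
    · rw [signStep_minus B st (hSmem.mpr hS) h0 (fun hc => hT (hTmem.mp hc)),
        if_pos hS, if_neg hT]
      simp only [List.length_cons]
      omega
    · rw [signStep_plus B st (fun hc => hS (hSmem.mp hc)) (hTmem.mpr hT), if_neg hS, if_pos hT]
      rcases hst2 : st.2 with _ | ⟨q, tl⟩
      · simp only
        have := H (n + 1)
        rw [card_inter_range_succ, card_inter_range_succ, if_pos hT, if_neg hS] at this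
        simp
        omega
      · simp only
        rw [hst2] at ih
        simp only [List.length_cons] at ih
        omega
    · rw [signStep_skip B st (by rw [hSmem, hTmem]; tauto) h0, if_neg hS, if_neg hT]
      omega

lemma foldl_rowStep_neutral (e a : ℕ) (B : Finset ℕ) (ha1 : 0 < a) :
    ∀ (L : List ℕ) (st : List ℕ × List ℕ),
    (∀ m ∈ L, a + m * e ∉ B ∧ (a + m * e) - 1 ∉ B) →
    L.foldl (fun st m => signStep B st (a + m * e)) st = st := by
  intro L
  induction L with
  | nil => intro st _; rfl
  | cons q L ih =>
    intro st h
    obtain ⟨h1, h2⟩ := h q (by simp)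
    rw [List.foldl_cons, signStep_skip B st (by constructor <;> intro hc <;> tauto) (by omega)]
    exact ih st (fun x hx => h x (by simp [hx]))

lemma oneRunnerBeta_4ones : oneRunnerBeta [1,1,1,1] 7 = ({0,1,2,4,5,6,7} : Finset ℕ) := by
  decide

end Automaton


/-- the unique exceptional partition for the `[4:3]`-pair formed by
the block `⟨4^a, 7^{b−a}, 6^{c−b}, 5^{d−c}, 4^{e−d}⟩` via the residue carried by
runner `a` is `⟨a_{(1,1,1,1)}⟩`. -/
theorem stmt9 (e a b c d : ℕ) (he : 2 ≤ e) (ha : 0 < a) (hab : a < b) (hbc : b ≤ c)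
    (hcd : c ≤ d) (hde : d ≤ e) (bd : ℕ → ℕ)
    (hbd : bd = fun i => if i < a then 4 else if i < b then 7 else
      if i < c then 6 else if i < d then 5 else 4)
    (r : ℕ) (hr : r = (Finset.range e).sum bd)
    (lam : AbacusPartition) (hlam : inBlock e bd 4 lam)
    (B : Finset ℕ) (hB : B = lam.betaSet r) :
    4 ≤ epsB e B a ↔ B = display e bd (fun m => if m = a then [1, 1, 1, 1] else []) := by
  have he0 : 0 < e := by omega
  have hae : a < e := by omega
  have hbda : bd a = 7 := by rw [hbd]; simp only [lt_irrefl, if_false, if_pos hab]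
  have hbda1 : bd (a - 1) = 4 := by rw [hbd]; simp only [if_pos (show a - 1 < a by omega)]
  obtain ⟨hlen, hcnt, hwt⟩ := hlam
  rw [← hr, ← hB] at hcnt hwt
  constructor
  · intro heps
    set S := rowsOf e B a with hSdef
    set T := rowsOf e B (a-1) with hTdef
    have cardS : S.card = 7 := by rw [hSdef, card_rowsOf, hcnt a hae, hbda]
    have cardT : T.card = 4 := by rw [hTdef, card_rowsOf, hcnt (a-1) (by omega), hbda1]
    have hSsum : runnerWeight e B a + 21 = ∑ m ∈ S, m := by
      have h := runnerWeight_add_choose e B hae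
      rwa [hcnt a hae, hbda] at h
    have hTsum : runnerWeight e B (a-1) + 6 = ∑ m ∈ T, m := by
      have h := runnerWeight_add_choose e B (show a - 1 < e by omega)
      rwa [hcnt (a-1) (by omega), hbda1] at h
    have hwsum : ∑ i ∈ Finset.range e, runnerWeight e B i = 4 := by
      rw [← abacusWeight_eq e B he0, hwt]
    have hmem_a : a ∈ Finset.range e := Finset.mem_range.mpr hae
    have hmem_a1 : (a-1) ∈ (Finset.range e).erase a :=
      Finset.mem_erase.mpr ⟨by omega, Finset.mem_range.mpr (by omega)⟩
    have hsplit1 := Finset.add_sum_erase (Finset.range e) (runnerWeight e B) hmem_a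
    have hsplit2 := Finset.add_sum_erase ((Finset.range e).erase a) (runnerWeight e B) hmem_a1
    have hrest : runnerWeight e B a + runnerWeight e B (a-1)
        + ∑ i ∈ ((Finset.range e).erase a).erase (a-1), runnerWeight e B i = 4 := by omega
    have hpair : runnerWeight e B a + runnerWeight e B (a-1) ≤ 4 := by omega
    -- existence of a prefix where T overtakes S
    have hex : ∃ m, (S ∩ Finset.range m).card < (T ∩ Finset.range m).card := by
      by_contra hc
      push_neg at hc
      have hinv := stack_invariant e a B he0 ha hae (fun m => hc m) (B.sup id + e + 2)
      rw [epsB, normalList, signState_eq_rowFold e a B he0 hae] at heps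
      have hTsub : T ⊆ Finset.range (B.sup id + e + 2) := by
        intro x hx
        have hmB : (a-1) + x * e ∈ B := (mem_rowsOf e B (show a-1<e by omega) x).mp hx
        have h1 := Finset.le_sup (f := id) hmB
        simp only [id] at h1
        have h2 : x ≤ x * e := Nat.le_mul_of_pos_right x he0
        exact Finset.mem_range.mpr (by omega)
      have hSsub : S ⊆ Finset.range (B.sup id + e + 2) := by
        intro x hx
        have hmB : a + x * e ∈ B := (mem_rowsOf e B hae x).mp hx
        have h1 := Finset.le_sup (f := id) hmB
        simp only [id] at h1
        have h2 : x ≤ x * e := Nat.le_mul_of_pos_right x he0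
        exact Finset.mem_range.mpr (by omega)
      rw [Finset.inter_eq_left.mpr hTsub, Finset.inter_eq_left.mpr hSsub, cardS, cardT] at hinv
      omega
    obtain ⟨m, hm, hmin⟩ : ∃ m, ((S ∩ Finset.range m).card < (T ∩ Finset.range m).card)
        ∧ ∀ k, k < m → ¬ ((S ∩ Finset.range k).card < (T ∩ Finset.range k).card) :=
      ⟨Nat.find hex, Nat.find_spec hex, fun k hk => Nat.find_min hex hk⟩
    have hm0 : m ≠ 0 := by intro h; rw [h] at hm; simp at hm
    set t := m - 1 with htdef
    have ht : ¬ ((S ∩ Finset.range t).card < (T ∩ Finset.range t).card) := hmin t (by omega)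
    rw [show m = t + 1 by omega, card_inter_range_succ, card_inter_range_succ] at hm
    have key : t ∈ T ∧ t ∉ S ∧ (T ∩ Finset.range t).card = (S ∩ Finset.range t).card := by
      by_cases h1 : t ∈ S <;> by_cases h2 : t ∈ T <;>
        simp only [h1, h2, if_true, if_false] at hm <;>
        first
          | exact absurd (by omega : (S ∩ Finset.range t).card < (T ∩ Finset.range t).card) ht
          | exact ⟨h2, h1, by omega⟩
    obtain ⟨htT, htS, hueq⟩ := key
    obtain ⟨u, hudef⟩ : ∃ u, (T ∩ Finset.range t).card = u := ⟨_, rfl⟩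
    have hu3 : u ≤ 3 := by
      have hsub : T ∩ Finset.range t ⊆ T.erase t := by
        intro x hx
        rcases Finset.mem_inter.mp hx with ⟨hx1, hx2⟩
        exact Finset.mem_erase.mpr ⟨by have := Finset.mem_range.mp hx2; omega, hx1⟩
      have h := Finset.card_le_card hsub
      rw [Finset.card_erase_of_mem htT, cardT, hudef] at h
      omega
    have hut : u ≤ t := by
      have h := Finset.card_le_card (Finset.inter_subset_right : T ∩ Finset.range t ⊆ _)
      rw [Finset.card_range, hudef] at h; omega
    have hS1c : (S ∩ Finset.range t).card = u := by omega
    have hT1 : Nat.choose u 2 ≤ ∑ x ∈ T ∩ Finset.range t, x :=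
      (sum_inter_range_choose u _ hudef).2.1
    have hS1 : Nat.choose u 2 ≤ ∑ x ∈ S ∩ Finset.range t, x :=
      (sum_inter_range_choose u _ hS1c).2.1
    have cardT2 : (T \ Finset.range t).card = 4 - u := by
      have h := Finset.card_inter_add_card_sdiff T (Finset.range t); omega
    have cardS2 : (S \ Finset.range t).card = 7 - u := by
      have h := Finset.card_inter_add_card_sdiff S (Finset.range t); omega
    have hkT2 : ∀ x ∈ T \ Finset.range t, t ≤ x := by
      intro x hx
      rcases Finset.mem_sdiff.mp hx with ⟨_, hx2⟩
      have h3 : ¬ x < t := fun hc => hx2 (Finset.mem_range.mpr hc)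
      omega
    have hkS2 : ∀ x ∈ S \ Finset.range t, t + 1 ≤ x := by
      intro x hx
      rcases Finset.mem_sdiff.mp hx with ⟨hx1, hx2⟩
      have h3 : ¬ x < t := fun hc => hx2 (Finset.mem_range.mpr hc)
      have h4 : x ≠ t := fun hc => htS (hc ▸ hx1)
      omega
    have hT2 := (sum_shifted (T \ Finset.range t) t hkT2).1
    rw [cardT2] at hT2
    have hS2 := (sum_shifted (S \ Finset.range t) (t+1) hkS2).1
    rw [cardS2] at hS2
    have hTsplit := Finset.sum_inter_add_sum_sdiff T (Finset.range t) (fun x => x)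
    have hSsplit := Finset.sum_inter_add_sum_sdiff S (Finset.range t) (fun x => x)
    -- force u = 3, t = 3 and the tight sums
    rw [Nat.choose_two_right] at hT1 hS1
    rw [Nat.choose_two_right] at hT2
    rw [Nat.choose_two_right] at hS2
    have hu_t : u = 3 ∧ t = 3 := by
      interval_cases u <;> omega
    obtain ⟨hu3', ht3⟩ := hu_t
    subst hu3'
    rw [ht3] at hudef hS1c hT1 hS1 hT2 hS2 hTsplit hSsplit cardT2 cardS2 hkT2 hkS2
    have hvals : (∑ x ∈ T, x = 6) ∧ (∑ x ∈ S, x = 25)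
        ∧ runnerWeight e B a = 4 ∧ runnerWeight e B (a-1) = 0 := by
      refine ⟨by omega, by omega, by omega, by omega⟩
    obtain ⟨hT6, hS25, hwa, hwa1⟩ := hvals
    have hTeq : T = Finset.range 4 := by
      apply (sum_inter_range_choose 4 T cardT).2.2
      rw [show Nat.choose 4 2 = 6 from rfl]; omega
    have hS3 : S ∩ Finset.range 3 = Finset.range 3 :=
      Finset.eq_of_subset_of_card_le Finset.inter_subset_right
        (by rw [Finset.card_range, hS1c])
    have hsum3 : ∑ x ∈ Finset.range 3, x = 3 := rfl
    have hS22 : ∑ x ∈ S \ Finset.range 3, x = 22 := by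
      rw [hS3, hsum3] at hSsplit; omega
    have hkS2' : ∀ x ∈ S \ Finset.range 3, 4 ≤ x := fun x hx => by
      have := hkS2 x hx; omega
    have hS2set : S \ Finset.range 3 = (Finset.range 4).image (· + 4) := by
      have h := (sum_shifted (S \ Finset.range 3) 4 hkS2').2
      rw [cardS2, hS22, show Nat.choose 4 2 = 6 from rfl] at h
      have h2 := h (by omega)
      norm_num at h2
      exact h2
    have hSu : S = (S ∩ Finset.range 3) ∪ (S \ Finset.range 3) := by
      ext x
      simp only [Finset.mem_union, Finset.mem_inter, Finset.mem_sdiff]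
      tauto
    rw [hS3, hS2set] at hSu
    have hSor : S = oneRunnerBeta [1,1,1,1] 7 := by
      rw [hSu, oneRunnerBeta_4ones]; decide
    have hz : ∀ i ∈ ((Finset.range e).erase a).erase (a-1), runnerWeight e B i = 0 := by
      have hsum0 : ∑ i ∈ ((Finset.range e).erase a).erase (a-1), runnerWeight e B i = 0 := by
        omega
      exact fun i hi => Finset.sum_eq_zero_iff.mp hsum0 i hi
    have hother : ∀ i, i < e → i ≠ a → i ≠ a - 1 → rowsOf e B i = Finset.range (bd i) := by
      intro i hie hia hia1
      have hw0 : runnerWeight e B i = 0 := hz i (Finset.mem_erase.mpr ⟨hia1,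
        Finset.mem_erase.mpr ⟨hia, Finset.mem_range.mpr hie⟩⟩)
      have hci : (rowsOf e B i).card = bd i := by rw [card_rowsOf, hcnt i hie]
      have hs := runnerWeight_add_choose e B hie
      rw [hw0, hcnt i hie, Nat.zero_add] at hs
      exact (sum_inter_range_choose (bd i) (rowsOf e B i) hci).2.2 (le_of_eq hs.symm)
    ext p
    rw [mem_iff_rowsOf e B he0 p, mem_display e he0]
    have hpe : p % e < e := Nat.mod_lt _ he0
    rcases eq_or_ne (p % e) a with hpa | hpa
    · rw [hpa, if_pos rfl, hbda, ← hSdef, hSor]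
    · rw [if_neg hpa, oneRunnerBeta_nil]
      rcases eq_or_ne (p % e) (a-1) with hpa1 | hpa1
      · rw [hpa1, hbda1, ← hTdef, hTeq]
      · rw [hother (p % e) hpe hpa hpa1]
  · -- display → exceptional
    intro hBd
    have hm1 : ∀ m, a + m * e ∈ B ↔ (m = 0 ∨ m = 1 ∨ m = 2 ∨ m = 4 ∨ m = 5 ∨ m = 6 ∨ m = 7) := by
      intro m
      rw [hBd, mem_display e he0, Nat.add_mul_mod_self_right, Nat.mod_eq_of_lt hae,
        Nat.add_mul_div_right _ _ he0, Nat.div_eq_of_lt hae, Nat.zero_add, if_pos rfl, hbda,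
        oneRunnerBeta_4ones]
      simp only [Finset.mem_insert, Finset.mem_singleton]
    have hm2 : ∀ m, a + m * e - 1 ∈ B ↔ m < 4 := by
      intro m
      rw [show a + m * e - 1 = (a - 1) + m * e by omega]
      rw [hBd, mem_display e he0, Nat.add_mul_mod_self_right, Nat.mod_eq_of_lt (show a-1 < e by omega),
        Nat.add_mul_div_right _ _ he0, Nat.div_eq_of_lt (show a-1 < e by omega), Nat.zero_add,
        if_neg (show ¬(a - 1 = a) by omega), hbda1, oneRunnerBeta_nil, Finset.mem_range]
    have hm0 : ∀ m : ℕ, ¬(a + m * e = 0) := fun m => by omega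
    rw [epsB, normalList, signState_eq_rowFold e a B he0 hae]
    have hsup : a + 7 * e ≤ B.sup id := Finset.le_sup (f := id) ((hm1 7).mpr (by omega))
    rw [show List.range (B.sup id + e + 2)
        = List.range 8 ++ (List.range (B.sup id + e + 2 - 8)).map (8 + ·) by
      rw [← List.range_add]; congr 1; omega]
    rw [List.foldl_append]
    rw [foldl_rowStep_neutral e a B ha _ _ ?_]
    · have h8 : (List.range 8).foldl (fun st m => signStep B st (a + m * e)) ([], [])
          = ([a + 3 * e], [a + 7 * e, a + 6 * e, a + 5 * e, a + 4 * e]) := by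
        rw [show List.range 8 = [0,1,2,3,4,5,6,7] from rfl]
        simp only [List.foldl_cons, List.foldl_nil]
        rw [signStep_skip B _ (by rw [hm1, hm2]; norm_num) (hm0 0)]
        rw [signStep_skip B _ (by rw [hm1, hm2]; norm_num) (hm0 1)]
        rw [signStep_skip B _ (by rw [hm1, hm2]; norm_num) (hm0 2)]
        rw [signStep_plus B _ (by rw [hm1]; norm_num) ((hm2 3).mpr (by norm_num))]
        rw [signStep_minus B _ ((hm1 4).mpr (by norm_num)) (hm0 4) (by rw [hm2]; norm_num)]
        rw [signStep_minus B _ ((hm1 5).mpr (by norm_num)) (hm0 5) (by rw [hm2]; norm_num)]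
        rw [signStep_minus B _ ((hm1 6).mpr (by norm_num)) (hm0 6) (by rw [hm2]; norm_num)]
        rw [signStep_minus B _ ((hm1 7).mpr (by norm_num)) (hm0 7) (by rw [hm2]; norm_num)]
      rw [h8]
      simp
    · intro m hm
      rcases List.mem_map.mp hm with ⟨j, _, rfl⟩
      constructor
      · rw [hm1]; omega
      · rw [show a + (8 + j) * e - 1 = a + (8+j) * e - 1 from rfl, hm2]; omega
end

section
/- Let e ≥ 2 and 0 < a < b ≤ c ≤ e, and let B be the block of e-weight 4 with notation ⟨4^a, 6^{b−a}, 5^{c−b}, 4^{e−c}⟩, which forms a [4:2]-pair via the residue j carried by runner a. The partitions lying in B that are exceptional for this pair are exactly: ⟨a_{(2,1,1)}⟩; ⟨a_{(1,1,1)}, i_{(1)}⟩ for 0 ≤ i ≤ e−1 with i ∉ {a−1, a}; and ⟨a_{(1,1,1,1)}⟩. -/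
/-!
Read runner by runner, an `e`-abacus is a family of one-runner abaci: its weight is the sum of
their weights, and the signature of the residue carried by runner `a` only sees runners `a - 1`
and `a`, through the rows they occupy. In the block, runner `a - 1` carries 4 beads and runner `a`
carries 6, and since the total weight is 4 these lie in the first 8 and 10 rows; a finite check
over such pairs of rows shows that `ε ≥ 3` exactly when runner `a - 1` is empty and runner `a`
displays `(2,1,1)`, `(1,1,1)` or `(1,1,1,1)`. The weight left over (0, 1 or 0) then forces every
other runner to be empty, except for one runner displaying `(1)` in the middle case.
-/

open Finset

lemma Finset.exists_eq_one_of_sum_eq_one {ι : Type*} {s : Finset ι} {f : ι → ℕ}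
    (h : ∑ i ∈ s, f i = 1) : ∃ i ∈ s, f i = 1 := by
  obtain ⟨i, hi, hfi⟩ := exists_ne_zero_of_sum_ne_zero (h ▸ one_ne_zero)
  exact ⟨i, hi, le_antisymm (h ▸ single_le_sum (fun _ _ => Nat.zero_le _) hi)
    (Nat.pos_of_ne_zero hfi)⟩

lemma Finset.add_le_sum_of_ne {ι M : Type*} [DecidableEq ι] [AddCommMonoid M] [Preorder M]
    [CanonicallyOrderedAdd M] {s : Finset ι} {f : ι → M} {i j : ι} (hi : i ∈ s) (hj : j ∈ s)
    (hij : i ≠ j) : f i + f j ≤ ∑ k ∈ s, f k :=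
  (sum_pair hij).symm.trans_le (sum_le_sum_of_subset (insert_subset hi (singleton_subset_iff.2 hj)))

lemma List.filter_range_mod_eq_map {e i : ℕ} (hi : i < e) (K : ℕ) :
    (List.range K).filter (fun p => p % e == i) =
      (List.range ((K + (e - 1) - i) / e)).map (i + · * e) := by
  have he : 0 < e := by omega
  refine List.Pairwise.eq_of_mem_iff (r := (· < ·)) (List.pairwise_lt_range.filter _)
    (List.pairwise_map.2 (List.pairwise_lt_range.imp fun h =>
      Nat.add_lt_add_left (Nat.mul_lt_mul_of_pos_right h he) i))
    fun p => ?_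
  simp only [List.mem_filter, List.mem_range, List.mem_map, beq_iff_eq,
    Nat.lt_div_iff_mul_lt he]
  constructor
  · rintro ⟨hpK, rfl⟩
    exact ⟨p / e, by have := Nat.mod_add_div' p e; omega, Nat.mod_add_div' p e⟩
  · rintro ⟨m, hm, rfl⟩
    refine ⟨by omega, ?_⟩
    rw [Nat.add_mul_mod_self_right, Nat.mod_eq_of_lt hi]

lemma Nat.add_mul_eq_add_mul_iff {e i j m n : ℕ} (hi : i < e) (hj : j < e) :
    i + m * e = j + n * e ↔ i = j ∧ m = n := by
  refine ⟨fun h => ?_, fun ⟨hij, hmn⟩ => hij ▸ hmn ▸ rfl⟩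
  have hdiv := congrArg (· / e) h
  have hmod := congrArg (· % e) h
  simp only [Nat.add_mul_div_right _ _ (by omega : 0 < e), Nat.div_eq_of_lt hi,
    Nat.div_eq_of_lt hj, Nat.add_mul_mod_self_right, Nat.mod_eq_of_lt hi,
    Nat.mod_eq_of_lt hj, zero_add] at hdiv hmod
  exact ⟨hmod, hdiv⟩

/-- The one-runner display of `λ(i)`: the rows occupied on runner `i`. -/
def runnerBeta (e : ℕ) (B : Finset ℕ) (i : ℕ) : Finset ℕ :=
  (B.filter (· % e = i)).image (· / e)

section Runners

variable {e : ℕ} {B : Finset ℕ}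

lemma mem_runnerBeta {i : ℕ} (hi : i < e) {m : ℕ} : m ∈ runnerBeta e B i ↔ i + m * e ∈ B := by
  simp only [runnerBeta, mem_image, mem_filter]
  constructor
  · rintro ⟨p, ⟨hp, rfl⟩, rfl⟩
    rwa [Nat.mod_add_div' p e]
  · intro h
    refine ⟨i + m * e, ⟨h, ?_⟩, ?_⟩ <;>
      simp [Nat.add_mul_div_right _ _ (by omega : 0 < e), Nat.div_eq_of_lt hi,
        Nat.mod_eq_of_lt hi]

lemma runnerBeta_ext {C : Finset ℕ} (he : 0 < e)
    (h : ∀ i < e, runnerBeta e B i = runnerBeta e C i) : B = C := by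
  ext p
  have hp := Nat.mod_lt p he
  rw [← Nat.mod_add_div' p e, ← mem_runnerBeta hp, ← mem_runnerBeta hp, h _ hp]

lemma injOn_div_filter_mod (i : ℕ) : Set.InjOn (· / e) (B.filter (· % e = i) : Set ℕ) := by
  intro p hp q hq hpq
  simp only [mem_coe, mem_filter] at hp hq
  rw [← Nat.mod_add_div' p e, ← Nat.mod_add_div' q e, hp.2, hq.2]
  exact congrArg (i + · * e) hpq

lemma runnerCount_eq_card_runnerBeta (i : ℕ) :
    runnerCount e B i = (runnerBeta e B i).card :=
  (card_image_of_injOn (injOn_div_filter_mod i)).symm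

lemma beadWeight_add_mul {i : ℕ} (hi : i < e) (n : ℕ) :
    beadWeight e B (i + n * e) = beadWeight 1 (runnerBeta e B i) n := by
  have he : 0 < e := by omega
  have hmod : ∀ m, (i + m * e) % e = i := fun m => by
    rw [Nat.add_mul_mod_self_right, Nat.mod_eq_of_lt hi]
  unfold beadWeight
  refine card_bij' (fun q _ => q / e) (fun m _ => i + m * e) ?_ ?_ ?_ ?_
  · intro q hq
    simp only [mem_filter, mem_range, Nat.mod_one, true_and, hmod] at hq ⊢
    obtain ⟨hqn, hqe, hqB⟩ := hq
    rw [← hqe] at hqn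
    nth_rewrite 1 [← Nat.mod_add_div' q e] at hqn
    rw [mem_runnerBeta hi, ← hqe, Nat.mod_add_div' q e]
    exact ⟨Nat.lt_of_mul_lt_mul_right (Nat.lt_of_add_lt_add_left hqn), hqB⟩
  · intro m hm
    simp only [mem_filter, mem_range, Nat.mod_one, true_and, hmod, mem_runnerBeta hi] at hm ⊢
    exact ⟨Nat.add_lt_add_left (Nat.mul_lt_mul_of_pos_right hm.1 he) i, hm.2⟩
  · intro q hq
    simp only [mem_filter, hmod] at hq
    rw [← hq.2.1, Nat.mod_add_div' q e]
  · intro m _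
    rw [Nat.add_mul_div_right _ _ he, Nat.div_eq_of_lt hi, zero_add]

lemma runnerWeight_eq_abacusWeight_runnerBeta {i : ℕ} (hi : i < e) :
    runnerWeight e B i = abacusWeight 1 (runnerBeta e B i) := by
  refine (sum_congr rfl fun p hp => ?_).trans (sum_image (injOn_div_filter_mod i)).symm
  rw [← beadWeight_add_mul hi, ← (mem_filter.1 hp).2, Nat.mod_add_div' p e]

lemma abacusWeight_eq_sum_runnerWeight (he : 0 < e) :
    abacusWeight e B = ∑ i ∈ range e, runnerWeight e B i :=
  (sum_fiberwise_of_maps_to (fun p _ => mem_range.2 (Nat.mod_lt p he)) _).symm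

lemma runnerBeta_display {bd : ℕ → ℕ} {lamOf : ℕ → List ℕ} {i : ℕ} (hi : i < e) :
    runnerBeta e (display e bd lamOf) i = oneRunnerBeta (lamOf i) (bd i) := by
  ext m
  simp only [mem_runnerBeta hi, display, mem_biUnion, mem_range, mem_image]
  constructor
  · rintro ⟨j, hj, x, hx, hxm⟩
    obtain ⟨rfl, rfl⟩ := (Nat.add_mul_eq_add_mul_iff hj hi).1 hxm
    exact hx
  · exact fun hm => ⟨i, hi, m, hm, rfl⟩

lemma eq_display_iff (he : 0 < e) {bd : ℕ → ℕ} {lamOf : ℕ → List ℕ} :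
    B = display e bd lamOf ↔ ∀ i < e, runnerBeta e B i = oneRunnerBeta (lamOf i) (bd i) := by
  refine ⟨fun h i hi => h ▸ runnerBeta_display hi, fun h => runnerBeta_ext he fun i hi => ?_⟩
  rw [h i hi, runnerBeta_display hi]

end Runners

section OneRunner

variable {S : Finset ℕ}

lemma beadWeight_one (S : Finset ℕ) (m : ℕ) : beadWeight 1 S m = #{q ∈ range m | q ∉ S} := by
  simp only [beadWeight, Nat.mod_one, true_and]

lemma beadWeight_le_abacusWeight {e s : ℕ} (hs : s ∈ S) : beadWeight e S s ≤ abacusWeight e S :=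
  single_le_sum (fun _ _ => Nat.zero_le _) hs

lemma lt_card_add_abacusWeight {s : ℕ} (hs : s ∈ S) : s < S.card + abacusWeight 1 S := by
  have hsplit := card_filter_add_card_filter_not (s := range s) (· ∈ S)
  have hbelow : #{q ∈ range s | q ∈ S} < S.card :=
    card_lt_card ⟨fun q hq => (mem_filter.1 hq).2,
      fun hsub => by simpa using (mem_filter.1 (hsub hs)).1⟩
  have hgaps := beadWeight_le_abacusWeight (e := 1) hs
  rw [beadWeight_one] at hgaps
  rw [card_range] at hsplit
  omega

lemma subset_range_card_add_abacusWeight : S ⊆ range (S.card + abacusWeight 1 S) :=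
  fun _ hs => mem_range.2 (lt_card_add_abacusWeight hs)

lemma card_le_abacusWeight_add {t : ℕ} (ht : t ∉ S) : S.card ≤ abacusWeight 1 S + t := by
  have hsplit := card_filter_add_card_filter_not (s := S) (t < ·)
  have habove : #{s ∈ S | t < s} ≤ abacusWeight 1 S := calc
    #{s ∈ S | t < s} = ∑ s ∈ S with t < s, 1 := card_eq_sum_ones _
    _ ≤ ∑ s ∈ S with t < s, beadWeight 1 S s := sum_le_sum fun s hs => by
      rw [beadWeight_one]
      exact card_pos.2 ⟨t, mem_filter.2 ⟨mem_range.2 (mem_filter.1 hs).2, ht⟩⟩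
    _ ≤ abacusWeight 1 S := sum_le_sum_of_subset (filter_subset _ _)
  have hbelow : #{s ∈ S | ¬t < s} ≤ t := by
    refine (card_le_card fun s hs => ?_).trans (card_range t).le
    obtain ⟨hsS, hst⟩ := mem_filter.1 hs
    exact mem_range.2 (lt_of_le_of_ne (not_lt.1 hst) fun h => ht (h ▸ hsS))
  omega

lemma eq_range_of_abacusWeight_eq_zero (hw : abacusWeight 1 S = 0) : S = range S.card := by
  refine (eq_of_subset_of_card_le (fun t ht => ?_) (card_range _).symm.le).symm
  by_contra htS
  have := card_le_abacusWeight_add htS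
  rw [mem_range] at ht
  omega

lemma abacusWeight_range (n : ℕ) : abacusWeight 1 (range n) = 0 :=
  sum_eq_zero fun m hm => by
    rw [beadWeight_one, card_eq_zero, filter_eq_empty_iff]
    exact fun q hq hqn => hqn (mem_range.2 ((mem_range.1 hq).trans (mem_range.1 hm)))

lemma oneRunnerBeta_nil_s10 (n : ℕ) : oneRunnerBeta [] n = range n := by
  ext x
  simp only [oneRunnerBeta, List.getD_nil, zero_add, mem_image, mem_range]
  exact ⟨fun ⟨t, ht, hx⟩ => by omega, fun hx => ⟨n - 1 - x, by omega, by omega⟩⟩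

lemma oneRunnerBeta_one (n : ℕ) : oneRunnerBeta [1] (n + 1) = insert (n + 1) (range n) := by
  ext x
  simp only [oneRunnerBeta, mem_image, mem_range, mem_insert]
  constructor
  · rintro ⟨_ | t, ht, rfl⟩
    · left
      rw [List.getD_cons_zero]
      omega
    · right
      rw [List.getD_cons_succ, List.getD_nil]
      omega
  · rintro (rfl | hx)
    · exact ⟨0, by omega, by rw [List.getD_cons_zero]; omega⟩
    · obtain ⟨t, ht⟩ : ∃ t, n - x = t + 1 := ⟨n - x - 1, by omega⟩
      exact ⟨t + 1, by omega, by rw [List.getD_cons_succ, List.getD_nil]; omega⟩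

/-- A gap below `S.card - 1` would have at least two beads above it, and without a bead at
`S.card` the display would be `range S.card`, of weight `0`. -/
lemma eq_oneRunnerBeta_one_of_abacusWeight_eq_one (hw : abacusWeight 1 S = 1) :
    S = oneRunnerBeta [1] S.card := by
  obtain ⟨n, hn⟩ : ∃ n, S.card = n + 1 := Nat.exists_eq_succ_of_ne_zero fun h0 => by
    simp [card_eq_zero.1 h0, abacusWeight] at hw
  have hlow : range n ⊆ S := fun t ht => by
    by_contra htS
    have := card_le_abacusWeight_add htS
    rw [mem_range] at ht
    omega
  have htop : n + 1 ∈ S := by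
    by_contra htS
    have hsub : S ⊆ range (n + 1) := fun s hs => by
      have := lt_card_add_abacusWeight hs
      have : s ≠ n + 1 := fun h => htS (h ▸ hs)
      rw [mem_range]
      omega
    rw [eq_of_subset_of_card_le hsub (by rw [hn, card_range]), abacusWeight_range] at hw
    exact zero_ne_one hw
  rw [hn, oneRunnerBeta_one]
  refine (eq_of_subset_of_card_le (insert_subset htop hlow) ?_).symm
  rw [hn, card_insert_of_notMem (by simp), card_range]

end OneRunner

section Signature

/-- The number of pending `−` signs of the signature, updated by the letter at position `p`; the
truncated subtraction makes a `+` with nothing to cancel leave it at `0`. -/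
def pendingStep (B : Finset ℕ) (k p : ℕ) : ℕ :=
  if p ∈ B ∧ ¬(p = 0 ∨ p - 1 ∈ B) then k + 1
  else if p ∉ B ∧ (p = 0 ∨ p - 1 ∈ B) then k - 1 else k

lemma length_foldl_signStep (B : Finset ℕ) (ps : List ℕ) (st : List ℕ × List ℕ) :
    (ps.foldl (signStep B) st).2.length = ps.foldl (pendingStep B) st.2.length := by
  induction ps generalizing st with
  | nil => rfl
  | cons p ps ih =>
    rw [List.foldl_cons, List.foldl_cons, ih]
    congr 1
    unfold signStep pendingStep
    split_ifs <;> first | rfl | (rcases st with ⟨_, _ | _⟩ <;> rfl)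

lemma epsB_eq_foldl_pendingStep (e : ℕ) (B : Finset ℕ) (res : ℕ) :
    epsB e B res = (posList e B res).foldl (pendingStep B) 0 :=
  length_foldl_signStep B _ ([], [])

/-- `pendingStep` at row `m` of a runner, given the rows `S₁` of the runner to its left and the
rows `S₂` of the runner itself. -/
def rowStep (S₁ S₂ : Finset ℕ) (k m : ℕ) : ℕ :=
  if m ∈ S₂ ∧ m ∉ S₁ then k + 1 else if m ∉ S₂ ∧ m ∈ S₁ then k - 1 else k

def rowEps (S₁ S₂ : Finset ℕ) (N : ℕ) : ℕ := (List.range N).foldl (rowStep S₁ S₂) 0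

variable {e a : ℕ} {B : Finset ℕ}

lemma pendingStep_add_mul (ha : 0 < a) (hae : a < e) (k m : ℕ) :
    pendingStep B k (a + m * e) = rowStep (runnerBeta e B (a - 1)) (runnerBeta e B a) k m := by
  have hprev : a + m * e - 1 = (a - 1) + m * e := by omega
  simp only [pendingStep, rowStep, mem_runnerBeta hae, mem_runnerBeta (by omega : a - 1 < e),
    hprev, show a + m * e ≠ 0 by omega, false_or]

lemma rowEps_eq_of_subset {S₁ S₂ : Finset ℕ} {M N : ℕ} (h₁ : S₁ ⊆ range M) (h₂ : S₂ ⊆ range M)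
    (hMN : M ≤ N) : rowEps S₁ S₂ N = rowEps S₁ S₂ M := by
  obtain ⟨d, rfl⟩ := Nat.exists_eq_add_of_le hMN
  rw [rowEps, List.range_add, List.foldl_append, List.foldl_map]
  refine List.foldl_fixed' (fun m => ?_) _
  have h₁m : M + m ∉ S₁ := fun h => by simpa using h₁ h
  have h₂m : M + m ∉ S₂ := fun h => by simpa using h₂ h
  simp [rowStep, h₁m, h₂m]

lemma epsB_eq_rowEps (ha : 0 < a) (hae : a < e) {M : ℕ} (h₁ : runnerBeta e B (a - 1) ⊆ range M)
    (h₂ : runnerBeta e B a ⊆ range M) :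
    epsB e B a = rowEps (runnerBeta e B (a - 1)) (runnerBeta e B a) M := by
  -- `posList` scans exactly the first `N` rows of runner `a`
  set N := (B.sup id + e + 2 + (e - 1) - a) / e
  have hN : ∀ i < e, runnerBeta e B i ⊆ range N := fun i hi m hm => by
    have := le_sup (f := id) ((mem_runnerBeta hi).1 hm)
    rw [id] at this
    rw [mem_range, Nat.lt_div_iff_mul_lt (by omega)]
    omega
  calc epsB e B a = rowEps (runnerBeta e B (a - 1)) (runnerBeta e B a) N := by
        rw [epsB_eq_foldl_pendingStep, posList, List.filter_range_mod_eq_map hae, List.foldl_map]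
        simp only [pendingStep_add_mul ha hae]
        rfl
    _ = rowEps (runnerBeta e B (a - 1)) (runnerBeta e B a) (M + N) :=
        (rowEps_eq_of_subset (hN _ (by omega)) (hN _ hae) (Nat.le_add_left N M)).symm
    _ = rowEps (runnerBeta e B (a - 1)) (runnerBeta e B a) M :=
        rowEps_eq_of_subset h₁ h₂ (Nat.le_add_right M N)

end Signature

theorem three_le_rowEps_iff_of_mem_powersetCard :
    ∀ S₁ ∈ (range 8).powersetCard 4, ∀ S₂ ∈ (range 10).powersetCard 6,
      abacusWeight 1 S₁ + abacusWeight 1 S₂ ≤ 4 →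
      (3 ≤ rowEps S₁ S₂ 10 ↔ S₁ = range 4 ∧ (S₂ = oneRunnerBeta [2, 1, 1] 6 ∨
        S₂ = oneRunnerBeta [1, 1, 1] 6 ∨ S₂ = oneRunnerBeta [1, 1, 1, 1] 6)) := by
  decide +kernel

lemma three_le_epsB_iff {e a : ℕ} {B : Finset ℕ} (ha : 0 < a) (hae : a < e)
    (h₁ : (runnerBeta e B (a - 1)).card = 4) (h₂ : (runnerBeta e B a).card = 6)
    (hw : abacusWeight 1 (runnerBeta e B (a - 1)) + abacusWeight 1 (runnerBeta e B a) ≤ 4) :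
    3 ≤ epsB e B a ↔ runnerBeta e B (a - 1) = range 4 ∧
      (runnerBeta e B a = oneRunnerBeta [2, 1, 1] 6 ∨
        runnerBeta e B a = oneRunnerBeta [1, 1, 1] 6 ∨
        runnerBeta e B a = oneRunnerBeta [1, 1, 1, 1] 6) := by
  have hsub : ∀ {S : Finset ℕ} {n : ℕ}, S.card = n → abacusWeight 1 S ≤ 4 → S ⊆ range (n + 4) :=
    fun hS hw => hS ▸ subset_range_card_add_abacusWeight.trans (range_subset_range.2 (by omega))
  have hsub₁ : runnerBeta e B (a - 1) ⊆ range 8 := hsub h₁ (by omega)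
  have hsub₂ : runnerBeta e B a ⊆ range 10 := hsub h₂ (by omega)
  rw [epsB_eq_rowEps ha hae (hsub₁.trans (range_subset_range.2 (by omega))) hsub₂]
  exact three_le_rowEps_iff_of_mem_powersetCard _ (mem_powersetCard.2 ⟨hsub₁, h₁⟩) _
    (mem_powersetCard.2 ⟨hsub₂, h₂⟩) hw

lemma eq_display_of_runnerBeta_eq {e : ℕ} {B : Finset ℕ} (he : 0 < e) {bd : ℕ → ℕ}
    {lamOf : ℕ → List ℕ} {T : Finset ℕ} (hT : T ⊆ range e)
    (hcard : ∀ i < e, (runnerBeta e B i).card = bd i)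
    (hwt : ∑ i ∈ range e, abacusWeight 1 (runnerBeta e B i) ≤
      ∑ i ∈ T, abacusWeight 1 (runnerBeta e B i))
    (hrows : ∀ i ∈ T, runnerBeta e B i = oneRunnerBeta (lamOf i) (bd i))
    (hnil : ∀ i < e, i ∉ T → lamOf i = []) : B = display e bd lamOf := by
  refine (eq_display_iff he).2 fun i hi => ?_
  by_cases hiT : i ∈ T
  · exact hrows i hiT
  rw [hnil i hi hiT, oneRunnerBeta_nil_s10, ← hcard i hi]
  refine eq_range_of_abacusWeight_eq_zero ?_
  have hrest := sum_sdiff hT (f := fun i => abacusWeight 1 (runnerBeta e B i))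
  have hi_le := single_le_sum (f := fun i => abacusWeight 1 (runnerBeta e B i))
    (fun _ _ => Nat.zero_le _) (mem_sdiff.2 ⟨mem_range.2 hi, hiT⟩)
  omega

section Block

variable {e w : ℕ} {bd : ℕ → ℕ} {lam : AbacusPartition}

lemma inBlock.card_runnerBeta (h : inBlock e bd w lam) {i : ℕ} (hi : i < e) :
    (runnerBeta e (lam.betaSet ((range e).sum bd)) i).card = bd i := by
  rw [← runnerCount_eq_card_runnerBeta, h.2.1 i hi]

lemma inBlock.sum_abacusWeight_runnerBeta (he : 0 < e) (h : inBlock e bd w lam) :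
    ∑ i ∈ range e, abacusWeight 1 (runnerBeta e (lam.betaSet ((range e).sum bd)) i) = w := by
  rw [← h.2.2, abacusWeight_eq_sum_runnerWeight he]
  exact sum_congr rfl fun i hi => (runnerWeight_eq_abacusWeight_runnerBeta (mem_range.1 hi)).symm

end Block

section Display

variable {e w a : ℕ} {B : Finset ℕ} {bd : ℕ → ℕ} {ρ : List ℕ} (he : 0 < e) (hae : a < e)
  (hcard : ∀ i < e, (runnerBeta e B i).card = bd i)
  (hwt : ∑ i ∈ range e, abacusWeight 1 (runnerBeta e B i) = w)
  (hρ : runnerBeta e B a = oneRunnerBeta ρ (bd a))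
include he hae hcard hwt hρ

lemma eq_display_of_abacusWeight_eq (hρw : abacusWeight 1 (runnerBeta e B a) = w) :
    B = display e bd (fun m => if m = a then ρ else []) :=
  eq_display_of_runnerBeta_eq he (T := {a}) (by simpa using hae) hcard
    (by rw [hwt, sum_singleton, hρw]) (by simp [hρ]) fun i _ hi => by simp_all

lemma exists_eq_display_of_abacusWeight_add_one_eq
    (hρw : abacusWeight 1 (runnerBeta e B a) + 1 = w) :
    ∃ i < e, i ≠ a ∧ abacusWeight 1 (runnerBeta e B i) = 1 ∧
      B = display e bd (fun m => if m = a then ρ else if m = i then [1] else []) := by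
  have hsplit : ∑ i ∈ (range e).erase a, abacusWeight 1 (runnerBeta e B i) +
      abacusWeight 1 (runnerBeta e B a) = w := by
    rw [sum_erase_add _ _ (mem_range.2 hae), hwt]
  rw [← hρw] at hsplit
  obtain ⟨i, hi, hwi⟩ := exists_eq_one_of_sum_eq_one
    (by omega : ∑ i ∈ (range e).erase a, abacusWeight 1 (runnerBeta e B i) = 1)
  obtain ⟨hia, hie⟩ := mem_erase.1 hi
  refine ⟨i, mem_range.1 hie, hia, hwi, eq_display_of_runnerBeta_eq he (T := {a, i})
    (by simp [insert_subset_iff, hae, mem_range.1 hie]) hcard ?_ ?_ ?_⟩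
  · rw [hwt, sum_pair (Ne.symm hia), hwi, hρw]
  · simp only [mem_insert, mem_singleton, forall_eq_or_imp, forall_eq, if_pos, hia, if_false]
    rw [← hcard i (mem_range.1 hie)]
    exact ⟨hρ, eq_oneRunnerBeta_one_of_abacusWeight_eq_one hwi⟩
  · intro j _ hj
    simp only [mem_insert, mem_singleton, not_or] at hj
    simp [hj]

end Display

theorem stmt10_general (e a b c : ℕ) (ha : 0 < a) (hab : a < b) (hbc : b ≤ c)
    (hce : c ≤ e) (bd : ℕ → ℕ)
    (hbd : bd = fun i => if i < a then 4 else if i < b then 6 else if i < c then 5 else 4)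
    (r : ℕ) (hr : r = (Finset.range e).sum bd)
    (lam : AbacusPartition) (hlam : inBlock e bd 4 lam)
    (B : Finset ℕ) (hB : B = lam.betaSet r) :
    3 ≤ epsB e B a ↔
      (B = display e bd (fun m => if m = a then [2, 1, 1] else []) ∨
       (∃ i, i < e ∧ i ≠ a - 1 ∧ i ≠ a ∧
         B = display e bd (fun m => if m = a then [1, 1, 1] else if m = i then [1] else [])) ∨
       B = display e bd (fun m => if m = a then [1, 1, 1, 1] else [])) := by
  have hae : a < e := by omega
  have he : 0 < e := by omega
  subst hr
  have hwt : ∑ i ∈ range e, abacusWeight 1 (runnerBeta e B i) = 4 :=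
    hB ▸ hlam.sum_abacusWeight_runnerBeta he
  have hcard : ∀ i < e, (runnerBeta e B i).card = bd i := hB ▸ fun i hi => hlam.card_runnerBeta hi
  have hbd_pred : bd (a - 1) = 4 := by simp only [hbd, show a - 1 < a by omega, if_true]
  have hbd_a : bd a = 6 := by simp [hbd, hab]
  have hpair := hwt ▸ add_le_sum_of_ne (f := fun i => abacusWeight 1 (runnerBeta e B i))
    (mem_range.2 (by omega : a - 1 < e)) (mem_range.2 hae) (by omega)
  rw [three_le_epsB_iff ha hae (by rw [hcard _ (by omega), hbd_pred]) (by rw [hcard _ hae, hbd_a])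
    hpair]
  constructor
  · rintro ⟨hS₁, hS₂ | hS₂ | hS₂⟩
    · exact Or.inl (eq_display_of_abacusWeight_eq he hae hcard hwt (hbd_a ▸ hS₂)
        (by rw [hS₂]; decide))
    · obtain ⟨i, hie, hia, hwi, h⟩ := exists_eq_display_of_abacusWeight_add_one_eq he hae hcard
        hwt (hbd_a ▸ hS₂) (by rw [hS₂]; decide)
      refine Or.inr (Or.inl ⟨i, hie, fun hi => ?_, hia, h⟩)
      rw [hi, hS₁, abacusWeight_range] at hwi
      exact zero_ne_one hwi
    · exact Or.inr (Or.inr (eq_display_of_abacusWeight_eq he hae hcard hwt (hbd_a ▸ hS₂)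
        (by rw [hS₂]; decide)))
  · have hne : a - 1 ≠ a := by omega
    rintro (h | ⟨i, -, hia1, -, h⟩ | h) <;>
      simp [h, runnerBeta_display hae, runnerBeta_display (by omega : a - 1 < e), hne, hbd_pred,
        hbd_a, oneRunnerBeta_nil_s10]
    rw [if_neg hia1.symm, oneRunnerBeta_nil_s10]

/-- exceptional partitions for the `[4:2]`-pair formed by the block
`⟨4^a, 6^{b−a}, 5^{c−b}, 4^{e−c}⟩` via the residue carried by runner `a`. -/
theorem stmt10 (e a b c : ℕ) (he : 2 ≤ e) (ha : 0 < a) (hab : a < b) (hbc : b ≤ c)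
    (hce : c ≤ e) (bd : ℕ → ℕ)
    (hbd : bd = fun i => if i < a then 4 else if i < b then 6 else if i < c then 5 else 4)
    (r : ℕ) (hr : r = (Finset.range e).sum bd)
    (lam : AbacusPartition) (hlam : inBlock e bd 4 lam)
    (B : Finset ℕ) (hB : B = lam.betaSet r) :
    3 ≤ epsB e B a ↔
      (B = display e bd (fun m => if m = a then [2, 1, 1] else []) ∨
       (∃ i, i < e ∧ i ≠ a - 1 ∧ i ≠ a ∧
         B = display e bd (fun m => if m = a then [1, 1, 1] else if m = i then [1] else [])) ∨
       B = display e bd (fun m => if m = a then [1, 1, 1, 1] else [])) :=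
  stmt10_general e a b c ha hab hbc hce bd hbd r hr lam hlam B hB
end

section
/- Let e ≥ 2 and 0 < a < b ≤ e, and let B be the block of e-weight 4 with notation ⟨4^a, 5^{b−a}, 4^{e−b}⟩, which forms a [4:1]-pair via the residue j carried by runner a. The partitions lying in B that are exceptional for this pair are exactly: ⟨a_{(3,1)}⟩; ⟨a_{(2,2)}⟩; ⟨a_{(2,1,1)}⟩; ⟨a_{(2,1)}, i_{(1)}⟩ for i ∉ {a−1, a} (possible only when e ≥ 3); ⟨a_{(1,1)}, i_{(2)}⟩ for i ∉ {a−1, a} (e ≥ 3); ⟨a_{(1,1)}, i_{(1)}, j'_{(1)}⟩ for i < j' with i, j' ∉ {a−1, a} (e ≥ 4); ⟨a_{(1,1,1)}, i_{(1)}⟩ for i ≠ a; ⟨a_{(1,1)}, i_{(1,1)}⟩ for i ∉ {a−1, a} (e ≥ 3); and ⟨a_{(1,1,1,1)}⟩. -/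
/-!
Split the abacus into its runners. The weight of a display is the sum of the weights of the
one-runner partitions `λ(i)`, and the signature on runner `a` only compares runner `a` with
runner `a - 1`, row by row. In this block every runner carries 4 or 5 beads and the total
weight is 4, so all beads lie in the first nine rows and each `λ(i)` is a partition of at
most 4. A finite check over the pairs `(λ(a - 1), λ(a))` shows that `ε ≥ 2` exactly when
`λ(a)` is one of `(3,1), (2,2), (2,1,1), (1⁴), (2,1), (1³), (1,1)` and `λ(a - 1)` is empty
unless `λ(a) = (1³)`; the remaining weight, at most 2, is then spread over the other runners
in the ways listed.
-/

open Finset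

namespace Abacus

/-- The one-runner display of `λ(i)`: the rows of the beads on runner `i`. -/
def runnerRows (e : ℕ) (B : Finset ℕ) (i : ℕ) : Finset ℕ :=
  (B.filter (· % e = i)).image (· / e)

theorem mem_runnerRows {e i : ℕ} (hi : i < e) {B : Finset ℕ} {m : ℕ} :
    m ∈ runnerRows e B i ↔ i + m * e ∈ B := by
  simp only [runnerRows, mem_image, mem_filter]
  constructor
  · rintro ⟨p, ⟨hp, rfl⟩, rfl⟩
    rwa [Nat.mod_add_div']
  · intro h
    refine ⟨i + m * e, ⟨h, ?_⟩, ?_⟩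
    · rw [Nat.add_mul_mod_self_right, Nat.mod_eq_of_lt hi]
    · rw [Nat.add_mul_div_right _ _ (by omega), Nat.div_eq_of_lt hi, zero_add]

theorem eq_of_runnerRows_eq {e : ℕ} (he : 0 < e) {B C : Finset ℕ}
    (h : ∀ i < e, runnerRows e B i = runnerRows e C i) : B = C := by
  ext p
  have hp := Nat.mod_lt p he
  rw [← Nat.mod_add_div' p e, ← mem_runnerRows hp, ← mem_runnerRows hp, h _ hp]

theorem injOn_div_filter_mod_eq (e i : ℕ) (B : Finset ℕ) :
    Set.InjOn (· / e) (B.filter (· % e = i) : Set ℕ) := by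
  intro p hp q hq hpq
  rw [mem_coe, mem_filter] at hp hq
  rw [← Nat.mod_add_div' p e, ← Nat.mod_add_div' q e, hp.2, hq.2]
  exact congrArg (i + · * e) hpq

theorem card_runnerRows (e : ℕ) (B : Finset ℕ) (i : ℕ) :
    (runnerRows e B i).card = runnerCount e B i :=
  card_image_of_injOn (injOn_div_filter_mod_eq e i B)

theorem runnerRows_display {e i : ℕ} (hi : i < e) (bd : ℕ → ℕ) (lamOf : ℕ → List ℕ) :
    runnerRows e (display e bd lamOf) i = oneRunnerBeta (lamOf i) (bd i) := by
  ext m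
  simp only [mem_runnerRows hi, display, mem_biUnion, mem_image, mem_range]
  constructor
  · rintro ⟨j, hj, m', hm', heq⟩
    obtain rfl : j = i := by
      simpa [Nat.add_mul_mod_self_right, Nat.mod_eq_of_lt hj, Nat.mod_eq_of_lt hi]
        using congrArg (· % e) heq
    rwa [← Nat.eq_of_mul_eq_mul_right (by omega : 0 < e) (by omega : m' * e = m * e)]
  · exact fun hm => ⟨i, hi, m, hm, rfl⟩

def rowWeight (S : Finset ℕ) : ℕ :=
  ∑ m ∈ S, #{m' ∈ range m | m' ∉ S}

theorem beadWeight_add_mul {e i : ℕ} (hi : i < e) (B : Finset ℕ) (m : ℕ) :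
    beadWeight e B (i + m * e) = #{m' ∈ range m | m' ∉ runnerRows e B i} := by
  have he : 0 < e := by omega
  refine card_nbij' (· / e) (i + · * e) ?_ ?_ ?_ ?_
  · intro q hq
    simp only [coe_filter, Set.mem_ofPred, mem_range, Nat.add_mul_mod_self_right,
      Nat.mod_eq_of_lt hi] at hq ⊢
    obtain ⟨hlt, hmod, hq⟩ := hq
    rw [← Nat.mod_add_div' q e, hmod] at hlt hq
    exact ⟨Nat.lt_of_mul_lt_mul_right (show q / e * e < m * e by omega),
      by rwa [mem_runnerRows hi]⟩
  · intro m' hm'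
    simp only [coe_filter, Set.mem_ofPred, mem_range, mem_runnerRows hi] at hm' ⊢
    refine ⟨Nat.add_lt_add_left (Nat.mul_lt_mul_of_pos_right hm'.1 he) i, ?_, hm'.2⟩
    rw [Nat.add_mul_mod_self_right, Nat.add_mul_mod_self_right]
  · intro q hq
    simp only [coe_filter, Set.mem_ofPred, Nat.add_mul_mod_self_right,
      Nat.mod_eq_of_lt hi] at hq
    simp only [← hq.2.1, Nat.mod_add_div']
  · intro m' _
    simp only [Nat.add_mul_div_right _ _ he, Nat.div_eq_of_lt hi, zero_add]

theorem abacusWeight_eq_sum_rowWeight {e : ℕ} (he : 0 < e) (B : Finset ℕ) :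
    abacusWeight e B = ∑ i ∈ range e, rowWeight (runnerRows e B i) := by
  rw [abacusWeight, ← sum_fiberwise_of_maps_to (fun p _ => mem_range.mpr (Nat.mod_lt p he))]
  refine sum_congr rfl fun i hi => ?_
  calc ∑ p ∈ B.filter (· % e = i), beadWeight e B p
      = ∑ p ∈ B.filter (· % e = i), #{m' ∈ range (p / e) | m' ∉ runnerRows e B i} := by
        refine sum_congr rfl fun p hp => ?_
        rw [← beadWeight_add_mul (mem_range.mp hi), ← (mem_filter.mp hp).2, Nat.mod_add_div']
    _ = rowWeight (runnerRows e B i) :=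
        (sum_image (f := fun m => #{m' ∈ range m | m' ∉ runnerRows e B i})
          (injOn_div_filter_mod_eq e i B)).symm

theorem subset_range_card_add_rowWeight (S : Finset ℕ) :
    S ⊆ range (S.card + rowWeight S) := by
  intro m hm
  have hgaps : #{m' ∈ range m | m' ∉ S} ≤ rowWeight S :=
    single_le_sum (f := fun m => #{m' ∈ range m | m' ∉ S}) (fun _ _ => Nat.zero_le _) hm
  have hbeads : #{m' ∈ range m | m' ∈ S} < S.card :=
    card_lt_card ⟨fun x hx => (mem_filter.mp hx).2, fun h => by simpa using h hm⟩
  have := card_filter_add_card_filter_not (s := range m) (· ∈ S)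
  rw [card_range] at this
  exact mem_range.mpr (by omega)

/-- One step of the reduction of the signature on runner `a`, keeping only the number `n` of
pending `−` signs: `S` and `T` are the rows occupied on runners `a - 1` and `a`, so row `m`
gives a `−` (bead on `a`, gap on `a - 1`) or a `+` (the reverse). A `+` read when `n = 0`
survives, which truncated subtraction models. -/
def epsStep (S T : Finset ℕ) (n m : ℕ) : ℕ :=
  if m ∈ T ∧ m ∉ S then n + 1 else if m ∉ T ∧ m ∈ S then n - 1 else n

def epsRows (S T : Finset ℕ) (N : ℕ) : ℕ :=
  (List.range N).foldl (epsStep S T) 0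

theorem epsRows_add {S T : Finset ℕ} {K : ℕ} (hS : S ⊆ range K) (hT : T ⊆ range K)
    (n : ℕ) :
    epsRows S T (K + n) = epsRows S T K := by
  have hfix : ∀ x, ∀ m ∈ (List.range n).map (K + ·), epsStep S T x m = x := by
    intro x m hm
    obtain ⟨j, -, rfl⟩ := List.mem_map.mp hm
    have hKS : K + j ∉ S := fun h => by simpa using hS h
    have hKT : K + j ∉ T := fun h => by simpa using hT h
    simp [epsStep, hKS, hKT]
  rw [epsRows, epsRows, List.range_add, List.foldl_append,
    List.foldl_ext _ (fun x _ => x) _ hfix, List.foldl_fixed]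

theorem epsRows_eq_of_subset {S T : Finset ℕ} {K N : ℕ}
    (hSK : S ⊆ range K) (hTK : T ⊆ range K) (hSN : S ⊆ range N) (hTN : T ⊆ range N) :
    epsRows S T K = epsRows S T N := by
  rw [← epsRows_add hSK hTK N, add_comm, epsRows_add hSN hTN]

theorem filter_range_mod_eq_map {e a : ℕ} (hae : a < e) (M : ℕ) :
    ∃ K, (∀ m, m < K ↔ a + m * e < M) ∧
      (List.range M).filter (· % e == a) = (List.range K).map (a + · * e) := by
  have he : 0 < e := by omega
  have hK : ∀ m, m < (M + (e - 1 - a)) / e ↔ a + m * e < M := fun m => by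
    rw [Nat.lt_div_iff_mul_lt he]
    omega
  refine ⟨_, hK, List.Pairwise.eq_of_mem_iff (r := (· < ·)) (List.pairwise_lt_range.filter _)
    (List.pairwise_map.mpr (List.pairwise_lt_range.imp fun h => by
      exact Nat.add_lt_add_left (Nat.mul_lt_mul_of_pos_right h he) a)) fun p => ?_⟩
  simp only [List.mem_filter, List.mem_range, beq_iff_eq, List.mem_map]
  constructor
  · rintro ⟨hp, rfl⟩
    exact ⟨p / e, (hK _).mpr (by rwa [Nat.mod_add_div']), Nat.mod_add_div' p e⟩
  · rintro ⟨m, hm, rfl⟩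
    exact ⟨(hK m).mp hm, by rw [Nat.add_mul_mod_self_right, Nat.mod_eq_of_lt hae]⟩

theorem length_signStep {e a : ℕ} (ha : 0 < a) (hae : a < e) (B : Finset ℕ)
    (st : List ℕ × List ℕ) (m : ℕ) :
    (signStep B st (a + m * e)).2.length =
      epsStep (runnerRows e B (a - 1)) (runnerRows e B a) st.2.length m := by
  have hT : a + m * e ∈ B ↔ m ∈ runnerRows e B a := (mem_runnerRows hae).symm
  have hS : a + m * e - 1 ∈ B ↔ m ∈ runnerRows e B (a - 1) := by
    rw [mem_runnerRows (by omega), show a + m * e - 1 = a - 1 + m * e by omega]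
  obtain ⟨l₁, l₂⟩ := st
  by_cases hmT : m ∈ runnerRows e B a <;> by_cases hmS : m ∈ runnerRows e B (a - 1) <;>
    cases l₂ <;> simp [signStep, epsStep, hT, hS, hmT, hmS, ha.ne']

theorem epsB_eq_epsRows {e a N : ℕ} (ha : 0 < a) (hae : a < e) {B : Finset ℕ}
    (hS : runnerRows e B (a - 1) ⊆ range N) (hT : runnerRows e B a ⊆ range N) :
    epsB e B a = epsRows (runnerRows e B (a - 1)) (runnerRows e B a) N := by
  obtain ⟨K, hK, hpos⟩ := filter_range_mod_eq_map hae (B.sup id + e + 2)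
  have hbound : ∀ p ∈ B, p < B.sup id + 1 := fun p hp =>
    Nat.lt_succ_of_le (le_sup (f := id) hp)
  rw [← epsRows_eq_of_subset (K := K) ?_ ?_ hS hT]
  · rw [epsB, normalList, signState, posList, hpos, List.foldl_map]
    exact (List.foldl_hom (·.2.length) fun st m => (length_signStep ha hae B st m).symm).symm
  · intro m hm
    have := hbound _ ((mem_runnerRows (by omega)).mp hm)
    exact mem_range.mpr ((hK m).mpr (by omega))
  · intro m hm
    have := hbound _ ((mem_runnerRows hae).mp hm)
    exact mem_range.mpr ((hK m).mpr (by omega))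

/-- The partitions of `n ≤ 4` as weakly decreasing lists; empty for `n > 4`. -/
def partitionsOf : ℕ → List (List ℕ)
  | 0 => [[]]
  | 1 => [[1]]
  | 2 => [[2], [1, 1]]
  | 3 => [[3], [2, 1], [1, 1, 1]]
  | 4 => [[4], [3, 1], [2, 2], [2, 1, 1], [1, 1, 1, 1]]
  | _ => []

theorem sum_eq_of_mem_partitionsOf {n : ℕ} {ρ : List ℕ} (h : ρ ∈ partitionsOf n) :
    ρ.sum = n := by
  match n with
  | 0 | 1 | 2 | 3 | 4 => revert ρ; decide
  | _ + 5 => simp [partitionsOf] at h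

set_option maxRecDepth 10000 in
theorem exists_mem_partitionsOf_eq_oneRunnerBeta {S : Finset ℕ}
    (hc : S.card = 4 ∨ S.card = 5) (hw : rowWeight S ≤ 4) :
    ∃ ρ ∈ partitionsOf (rowWeight S), S = oneRunnerBeta ρ S.card := by
  have hS : S ∈ (range 9).powerset := mem_powerset.mpr
    ((subset_range_card_add_rowWeight S).trans (range_subset_range.mpr (by omega)))
  have key : ∀ S ∈ (range 9).powerset, S.card = 4 ∨ S.card = 5 → rowWeight S ≤ 4 →
      ∃ ρ ∈ partitionsOf (rowWeight S), S = oneRunnerBeta ρ S.card := by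
    decide
  exact key S hS hc hw

set_option synthInstance.maxSize 1000 in
theorem two_le_epsRows_iff {k l : ℕ} (hkl : k + l ≤ 4) {ρ σ : List ℕ}
    (hρ : ρ ∈ partitionsOf k) (hσ : σ ∈ partitionsOf l) :
    2 ≤ epsRows (oneRunnerBeta ρ 4) (oneRunnerBeta σ 5) 9 ↔
      σ ∈ [[3, 1], [2, 2], [2, 1, 1], [1, 1, 1, 1], [2, 1], [1, 1, 1], [1, 1]] ∧
        (ρ = [] ∨ σ = [1, 1, 1]) := by
  have key : ∀ k < 5, ∀ l < 5, k + l ≤ 4 →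
      ∀ ρ ∈ partitionsOf k, ∀ σ ∈ partitionsOf l,
      (2 ≤ epsRows (oneRunnerBeta ρ 4) (oneRunnerBeta σ 5) 9 ↔
        σ ∈ [[3, 1], [2, 2], [2, 1, 1], [1, 1, 1, 1], [2, 1], [1, 1, 1], [1, 1]] ∧
          (ρ = [] ∨ σ = [1, 1, 1])) := by
    decide
  exact key k (by omega) l (by omega) hkl ρ hρ σ hσ

section RunnerFamilies

variable {s : Finset ℕ} {ρ : ℕ → List ℕ} {w : ℕ → ℕ}

theorem eq_nil_of_sum_eq_zero (hρ : ∀ i ∈ s, ρ i ∈ partitionsOf (w i))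
    (h : ∑ i ∈ s, w i = 0) : ∀ i ∈ s, ρ i = [] := by
  intro i hi
  simpa [sum_eq_zero_iff.mp h i hi, partitionsOf] using hρ i hi

theorem exists_eq_single_of_sum_eq_one (hρ : ∀ i ∈ s, ρ i ∈ partitionsOf (w i))
    (h : ∑ i ∈ s, w i = 1) :
    ∃ i₀ ∈ s, ∀ i ∈ s, ρ i = if i = i₀ then [1] else [] := by
  obtain ⟨i₀, hi₀, hne⟩ := exists_ne_zero_of_sum_ne_zero (h ▸ one_ne_zero)
  have hsplit := sum_erase_add s w hi₀
  have hrest := eq_nil_of_sum_eq_zero (fun i hi => hρ i (mem_of_mem_erase hi))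
    (show ∑ i ∈ s.erase i₀, w i = 0 by omega)
  refine ⟨i₀, hi₀, fun i hi => ?_⟩
  split_ifs with hi'
  · subst hi'
    simpa [show w i = 1 by omega, partitionsOf] using hρ i hi
  · exact hrest i (mem_erase.mpr ⟨hi', hi⟩)

theorem exists_eq_ite_of_sum_eq_two (hρ : ∀ i ∈ s, ρ i ∈ partitionsOf (w i))
    (h : ∑ i ∈ s, w i = 2) :
    (∃ i₀ ∈ s, ∃ π ∈ partitionsOf 2, ∀ i ∈ s, ρ i = if i = i₀ then π else []) ∨
      ∃ i₀ ∈ s, ∃ j₀ ∈ s, i₀ < j₀ ∧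
        ∀ i ∈ s, ρ i = if i = i₀ ∨ i = j₀ then [1] else [] := by
  obtain ⟨i₀, hi₀, hne⟩ := exists_ne_zero_of_sum_ne_zero (h ▸ two_ne_zero)
  have hsplit := sum_erase_add s w hi₀
  have hρ' : ∀ i ∈ s.erase i₀, ρ i ∈ partitionsOf (w i) := fun i hi =>
    hρ i (mem_of_mem_erase hi)
  rcases (show w i₀ = 2 ∨ w i₀ = 1 by omega) with h₂ | h₁
  · left
    have hrest := eq_nil_of_sum_eq_zero hρ' (show ∑ i ∈ s.erase i₀, w i = 0 by omega)
    refine ⟨i₀, hi₀, ρ i₀, h₂ ▸ hρ i₀ hi₀, fun i hi => ?_⟩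
    split_ifs with hi'
    · rw [hi']
    · exact hrest i (mem_erase.mpr ⟨hi', hi⟩)
  · right
    obtain ⟨j₀, hj₀, hrest⟩ :=
      exists_eq_single_of_sum_eq_one hρ' (show ∑ i ∈ s.erase i₀, w i = 1 by omega)
    have hpair : ∀ i ∈ s, ρ i = if i = i₀ ∨ i = j₀ then [1] else [] := by
      intro i hi
      by_cases hi' : i = i₀
      · subst hi'
        simpa [h₁, partitionsOf] using hρ i hi
      · simp [hrest i (mem_erase.mpr ⟨hi', hi⟩), hi']
    rcases (ne_of_mem_erase hj₀).lt_or_gt with hlt | hlt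
    · exact ⟨j₀, mem_of_mem_erase hj₀, i₀, hi₀, hlt,
        fun i hi => by simp only [hpair i hi, or_comm]⟩
    · exact ⟨i₀, hi₀, j₀, mem_of_mem_erase hj₀, hlt, hpair⟩

theorem ne_of_forall_eq_ite {i₀ j : ℕ} {π : List ℕ}
    (hR : ∀ i ∈ s, ρ i = if i = i₀ then π else []) (hj : j ∈ s) (hπ : π ≠ [])
    (hnil : ρ j = []) : i₀ ≠ j := by
  rintro rfl
  simp [hR i₀ hj, hπ] at hnil

end RunnerFamilies

theorem display_eq_ite {e a : ℕ} (bd : ℕ → ℕ) {ρ R : ℕ → List ℕ} {σ : List ℕ}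
    (hσ : ρ a = σ) (hR : ∀ i ∈ (range e).erase a, ρ i = R i) :
    display e bd ρ = display e bd (fun m => if m = a then σ else R m) := by
  refine biUnion_congr rfl fun i hi => ?_
  dsimp only
  split_ifs with h
  · rw [h, hσ]
  · rw [hR i (mem_erase.mpr ⟨h, hi⟩)]

def IsExceptionalDisplay (e a : ℕ) (bd : ℕ → ℕ) (B : Finset ℕ) : Prop :=
  B = display e bd (fun m => if m = a then [3, 1] else []) ∨
    B = display e bd (fun m => if m = a then [2, 2] else []) ∨
    B = display e bd (fun m => if m = a then [2, 1, 1] else []) ∨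
    (∃ i, i < e ∧ i ≠ a - 1 ∧ i ≠ a ∧
      B = display e bd (fun m => if m = a then [2, 1] else if m = i then [1] else [])) ∨
    (∃ i, i < e ∧ i ≠ a - 1 ∧ i ≠ a ∧
      B = display e bd (fun m => if m = a then [1, 1] else if m = i then [2] else [])) ∨
    (∃ i j, i < j ∧ j < e ∧ i ≠ a - 1 ∧ i ≠ a ∧ j ≠ a - 1 ∧ j ≠ a ∧
      B = display e bd
        (fun m => if m = a then [1, 1] else if m = i ∨ m = j then [1] else [])) ∨
    (∃ i, i < e ∧ i ≠ a ∧
      B = display e bd (fun m => if m = a then [1, 1, 1] else if m = i then [1] else [])) ∨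
    (∃ i, i < e ∧ i ≠ a - 1 ∧ i ≠ a ∧
      B = display e bd (fun m => if m = a then [1, 1] else if m = i then [1, 1] else [])) ∨
    B = display e bd (fun m => if m = a then [1, 1, 1, 1] else [])

theorem two_le_epsRows_of_isExceptionalDisplay {e a : ℕ} {bd : ℕ → ℕ} (ha : 0 < a)
    (hae : a < e) (h₄ : bd (a - 1) = 4) (h₅ : bd a = 5) {B : Finset ℕ}
    (hB : IsExceptionalDisplay e a bd B) :
    2 ≤ epsRows (runnerRows e B (a - 1)) (runnerRows e B a) 9 := by
  rcases hB with rfl | rfl | rfl | ⟨i, -, hi, -, rfl⟩ | ⟨i, -, hi, -, rfl⟩ |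
    ⟨i, j, -, -, hi, -, hj, -, rfl⟩ | ⟨i, -, -, rfl⟩ | ⟨i, -, hi, -, rfl⟩ | rfl
  all_goals
    rw [runnerRows_display (by omega), runnerRows_display hae, h₄, h₅]
    split_ifs <;> first | omega | decide

theorem sub_one_mem_erase_range {e a : ℕ} (ha : 0 < a) (hae : a < e) :
    a - 1 ∈ (range e).erase a :=
  mem_erase.mpr ⟨by omega, mem_range.mpr (by omega)⟩

theorem isExceptionalDisplay_of_rest {e a : ℕ} (bd : ℕ → ℕ) (ha : 0 < a) (hae : a < e)
    {ρ : ℕ → List ℕ} {w : ℕ → ℕ}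
    (hρ : ∀ i ∈ (range e).erase a, ρ i ∈ partitionsOf (w i))
    (hrest : ∑ i ∈ (range e).erase a, w i + (ρ a).sum = 4)
    (hσ : ρ a ∈ [[3, 1], [2, 2], [2, 1, 1], [1, 1, 1, 1], [2, 1], [1, 1, 1], [1, 1]])
    (hnil : ρ (a - 1) = [] ∨ ρ a = [1, 1, 1]) :
    IsExceptionalDisplay e a bd (display e bd ρ) := by
  have hs : ∀ {i}, i ∈ (range e).erase a → i < e ∧ i ≠ a := fun hi =>
    ⟨mem_range.mp (mem_of_mem_erase hi), ne_of_mem_erase hi⟩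
  have ha₁ := sub_one_mem_erase_range ha hae
  simp only [List.mem_cons, List.not_mem_nil, or_false] at hσ
  rcases hσ with hσ | hσ | hσ | hσ | hσ | hσ | hσ <;>
    simp only [hσ, List.sum_cons, List.sum_nil] at hrest hnil
  · exact Or.inl (display_eq_ite bd hσ (eq_nil_of_sum_eq_zero hρ (by omega)))
  · exact Or.inr <| Or.inl (display_eq_ite bd hσ (eq_nil_of_sum_eq_zero hρ (by omega)))
  · exact Or.inr <| Or.inr <| Or.inl
      (display_eq_ite bd hσ (eq_nil_of_sum_eq_zero hρ (by omega)))
  · exact Or.inr <| Or.inr <| Or.inr <| Or.inr <| Or.inr <| Or.inr <| Or.inr <| Or.inr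
      (display_eq_ite bd hσ (eq_nil_of_sum_eq_zero hρ (by omega)))
  · obtain ⟨i₀, hi₀, hR⟩ := exists_eq_single_of_sum_eq_one hρ (by omega)
    exact Or.inr <| Or.inr <| Or.inr <| Or.inl ⟨i₀, (hs hi₀).1,
      ne_of_forall_eq_ite hR ha₁ (by simp) (hnil.resolve_right (by decide)), (hs hi₀).2,
      display_eq_ite bd hσ hR⟩
  · obtain ⟨i₀, hi₀, hR⟩ := exists_eq_single_of_sum_eq_one hρ (by omega)
    exact Or.inr <| Or.inr <| Or.inr <| Or.inr <| Or.inr <| Or.inr <| Or.inl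
      ⟨i₀, (hs hi₀).1, (hs hi₀).2, display_eq_ite bd hσ hR⟩
  · replace hnil := hnil.resolve_right (by decide)
    rcases exists_eq_ite_of_sum_eq_two hρ (by omega) with
      ⟨i₀, hi₀, π, hπ, hR⟩ | ⟨i₀, hi₀, j₀, hj₀, hlt, hR⟩
    · have hi₀a₁ := ne_of_forall_eq_ite hR ha₁ (by rintro rfl; simp [partitionsOf] at hπ) hnil
      simp only [partitionsOf, List.mem_cons, List.not_mem_nil, or_false] at hπ
      rcases hπ with rfl | rfl
      · exact Or.inr <| Or.inr <| Or.inr <| Or.inr <| Or.inl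
          ⟨i₀, (hs hi₀).1, hi₀a₁, (hs hi₀).2, display_eq_ite bd hσ hR⟩
      · exact Or.inr <| Or.inr <| Or.inr <| Or.inr <| Or.inr <| Or.inr <| Or.inr <| Or.inl
          ⟨i₀, (hs hi₀).1, hi₀a₁, (hs hi₀).2, display_eq_ite bd hσ hR⟩
    · have hR₁ := hR (a - 1) ha₁
      rw [hnil] at hR₁
      split_ifs at hR₁ with hpair
      exact Or.inr <| Or.inr <| Or.inr <| Or.inr <| Or.inr <| Or.inl
        ⟨i₀, j₀, hlt, (hs hj₀).1, by omega, (hs hi₀).2, by omega, (hs hj₀).2,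
          display_eq_ite bd hσ hR⟩

theorem isExceptionalDisplay_of_two_le_epsRows {e a : ℕ} (bd : ℕ → ℕ) (ha : 0 < a)
    (hae : a < e) {ρ : ℕ → List ℕ} {w : ℕ → ℕ}
    (hρ : ∀ i < e, ρ i ∈ partitionsOf (w i))
    (hw : ∑ i ∈ range e, w i = 4)
    (h2 : 2 ≤ epsRows (oneRunnerBeta (ρ (a - 1)) 4) (oneRunnerBeta (ρ a) 5) 9) :
    IsExceptionalDisplay e a bd (display e bd ρ) := by
  have hsplit := sum_erase_add (range e) w (mem_range.mpr hae)
  have hle : w (a - 1) ≤ ∑ i ∈ (range e).erase a, w i :=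
    single_le_sum (fun _ _ => Nat.zero_le _) (sub_one_mem_erase_range ha hae)
  obtain ⟨hσ, hnil⟩ := (two_le_epsRows_iff (by omega) (hρ _ (by omega)) (hρ a hae)).mp h2
  refine isExceptionalDisplay_of_rest bd ha hae
    (fun i hi => hρ i (mem_range.mp (mem_of_mem_erase hi))) ?_ hσ hnil
  rw [sum_eq_of_mem_partitionsOf (hρ a hae)]
  omega

theorem exists_partitionsOf_eq_display {e : ℕ} (he : 0 < e) {bd : ℕ → ℕ} {B : Finset ℕ}
    (hcard : ∀ i < e, (runnerRows e B i).card = bd i) (hbd : ∀ i < e, bd i = 4 ∨ bd i = 5)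
    (hw : ∀ i < e, rowWeight (runnerRows e B i) ≤ 4) :
    ∃ ρ : ℕ → List ℕ, (∀ i < e, ρ i ∈ partitionsOf (rowWeight (runnerRows e B i))) ∧
      B = display e bd ρ := by
  choose! ρ hρ hBρ using fun i (hi : i < e) =>
    exists_mem_partitionsOf_eq_oneRunnerBeta (hcard i hi ▸ hbd i hi) (hw i hi)
  refine ⟨ρ, hρ, eq_of_runnerRows_eq he fun i hi => ?_⟩
  rw [runnerRows_display hi, hBρ i hi, hcard i hi]

end Abacus

open Abacus in
theorem stmt11_general (e a b : ℕ) (ha : 0 < a) (hab : a < b) (hbe : b ≤ e)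
    (bd : ℕ → ℕ) (hbd : bd = fun i => if i < a then 4 else if i < b then 5 else 4)
    (r : ℕ) (hr : r = (Finset.range e).sum bd)
    (lam : AbacusPartition) (hlam : inBlock e bd 4 lam)
    (B : Finset ℕ) (hB : B = lam.betaSet r) :
    2 ≤ epsB e B a ↔
      (B = display e bd (fun m => if m = a then [3, 1] else []) ∨
       B = display e bd (fun m => if m = a then [2, 2] else []) ∨
       B = display e bd (fun m => if m = a then [2, 1, 1] else []) ∨
       (∃ i, i < e ∧ i ≠ a - 1 ∧ i ≠ a ∧
         B = display e bd (fun m => if m = a then [2, 1] else if m = i then [1] else [])) ∨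
       (∃ i, i < e ∧ i ≠ a - 1 ∧ i ≠ a ∧
         B = display e bd (fun m => if m = a then [1, 1] else if m = i then [2] else [])) ∨
       (∃ i j, i < j ∧ j < e ∧ i ≠ a - 1 ∧ i ≠ a ∧ j ≠ a - 1 ∧ j ≠ a ∧
         B = display e bd
           (fun m => if m = a then [1, 1] else if m = i ∨ m = j then [1] else [])) ∨
       (∃ i, i < e ∧ i ≠ a ∧
         B = display e bd (fun m => if m = a then [1, 1, 1] else if m = i then [1] else [])) ∨
       (∃ i, i < e ∧ i ≠ a - 1 ∧ i ≠ a ∧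
         B = display e bd (fun m => if m = a then [1, 1] else if m = i then [1, 1] else [])) ∨
       B = display e bd (fun m => if m = a then [1, 1, 1, 1] else [])) := by
  obtain ⟨-, hcount, hweight⟩ := hlam
  rw [← hr, ← hB] at hcount hweight
  have hae : a < e := by omega
  have hbd₄₅ : ∀ i, bd i = 4 ∨ bd i = 5 := fun i => by
    subst hbd; dsimp only; split_ifs <;> simp
  have h₄ : bd (a - 1) = 4 := by simp [hbd, show a - 1 < a by omega]
  have h₅ : bd a = 5 := by simp [hbd, hab]
  have hcard : ∀ i < e, (runnerRows e B i).card = bd i := fun i hi =>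
    (card_runnerRows e B i).trans (hcount i hi)
  have hw : ∑ i ∈ range e, rowWeight (runnerRows e B i) = 4 := by
    rw [← abacusWeight_eq_sum_rowWeight (by omega), hweight]
  have hw_le : ∀ i < e, rowWeight (runnerRows e B i) ≤ 4 := fun i hi =>
    hw ▸ single_le_sum (f := fun i => rowWeight (runnerRows e B i)) (fun _ _ => Nat.zero_le _)
      (mem_range.mpr hi)
  have hsub : ∀ i < e, runnerRows e B i ⊆ range 9 := fun i hi =>
    (subset_range_card_add_rowWeight _).trans <| range_subset_range.mpr <| by
      have := hw_le i hi; rcases hbd₄₅ i with h | h <;> rw [hcard i hi, h] <;> omega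
  rw [epsB_eq_epsRows ha hae (hsub _ (by omega)) (hsub a hae)]
  refine ⟨fun h2 => ?_, two_le_epsRows_of_isExceptionalDisplay ha hae h₄ h₅⟩
  obtain ⟨ρ, hρ, rfl⟩ :=
    exists_partitionsOf_eq_display (by omega) hcard (fun i _ => hbd₄₅ i) hw_le
  rw [runnerRows_display (by omega), runnerRows_display hae, h₄, h₅] at h2
  exact isExceptionalDisplay_of_two_le_epsRows bd ha hae hρ hw h2

/-- exceptional partitions for the `[4:1]`-pair formed by the block
`⟨4^a, 5^{b−a}, 4^{e−b}⟩` via the residue carried by runner `a`. -/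
theorem stmt11 (e a b : ℕ) (he : 2 ≤ e) (ha : 0 < a) (hab : a < b) (hbe : b ≤ e)
    (bd : ℕ → ℕ) (hbd : bd = fun i => if i < a then 4 else if i < b then 5 else 4)
    (r : ℕ) (hr : r = (Finset.range e).sum bd)
    (lam : AbacusPartition) (hlam : inBlock e bd 4 lam)
    (B : Finset ℕ) (hB : B = lam.betaSet r) :
    2 ≤ epsB e B a ↔
      (B = display e bd (fun m => if m = a then [3, 1] else []) ∨
       B = display e bd (fun m => if m = a then [2, 2] else []) ∨
       B = display e bd (fun m => if m = a then [2, 1, 1] else []) ∨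
       (∃ i, i < e ∧ i ≠ a - 1 ∧ i ≠ a ∧
         B = display e bd (fun m => if m = a then [2, 1] else if m = i then [1] else [])) ∨
       (∃ i, i < e ∧ i ≠ a - 1 ∧ i ≠ a ∧
         B = display e bd (fun m => if m = a then [1, 1] else if m = i then [2] else [])) ∨
       (∃ i j, i < j ∧ j < e ∧ i ≠ a - 1 ∧ i ≠ a ∧ j ≠ a - 1 ∧ j ≠ a ∧
         B = display e bd
           (fun m => if m = a then [1, 1] else if m = i ∨ m = j then [1] else [])) ∨
       (∃ i, i < e ∧ i ≠ a ∧
         B = display e bd (fun m => if m = a then [1, 1, 1] else if m = i then [1] else [])) ∨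
       (∃ i, i < e ∧ i ≠ a - 1 ∧ i ≠ a ∧
         B = display e bd (fun m => if m = a then [1, 1] else if m = i then [1, 1] else [])) ∨
       B = display e bd (fun m => if m = a then [1, 1, 1, 1] else [])) :=
  stmt11_general e a b ha hab hbe bd hbd r hr lam hlam B hB
end

section
/- Let e = 5, λ = (10,6,5,2,1,1) and μ = (15,3,3,2,2). Then λ and μ have the same 5-core and the same 5-weight, namely 5; the induced 5-sequences with 10 beads are s(λ)_{10} = (19,14,14,12,9) and s(μ)_{10} = (24,19,14,11,10); μ strictly dominates λ in the dominance order; yet μ is not greater than λ in the product order (since the componentwise inequality s(μ)_{10} ≥ s(λ)_{10} fails, as 11 < 12). Hence the dominance order between two partitions of the same 5-core and 5-weight does not imply the product order. -/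
/-!
Everything about `λ` and `μ` themselves is a finite computation. The only infinite part is
the product order, which compares `s(λ)_r` and `s(μ)_r` for all large `r`. Displaying with
one more bead puts a new bead at `0` and moves every other bead one position along without
changing its weight, so `s(λ)_{r+k} = s(λ)_r + k`; hence the failure `12 > 11` at `r = 10` persists for all `r ≥ 10`.
-/

open Finset

lemma beadWeight_le_div (e : ℕ) (B : Finset ℕ) (p : ℕ) : beadWeight e B p ≤ p / e := by
  calc beadWeight e B p ≤ #(range (p / e)) := by
        refine card_le_card_of_injOn (· / e) (fun q hq => ?_) fun q hq q' hq' h => ?_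
        · simp only [coe_filter, mem_range, Set.mem_ofPred_eq, coe_range, Set.mem_Iio] at hq ⊢
          exact (Nat.div_le_div_right hq.1.le).lt_of_ne fun h => hq.1.ne (Nat.ext_div_mod h hq.2.1)
        · simp only [coe_filter, mem_range, Set.mem_ofPred_eq] at hq hq'
          exact Nat.ext_div_mod h (hq.2.1.trans hq'.2.1.symm)
    _ = p / e := card_range _

lemma beadWeight_insert_zero_image_succ (e : ℕ) (B : Finset ℕ) (p : ℕ) :
    beadWeight e (insert 0 (B.image (· + 1))) (p + 1) = beadWeight e B p := by
  unfold beadWeight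
  rw [show (range (p + 1)).filter
        (fun q => q % e = (p + 1) % e ∧ q ∉ insert 0 (B.image (· + 1))) =
      ((range p).filter (fun q => q % e = p % e ∧ q ∉ B)).image (· + 1) from ?_]
  · exact card_image_of_injective _ (add_left_injective 1)
  ext q
  simp only [mem_filter, mem_range, mem_image, mem_insert]
  constructor
  · rintro ⟨hq, hmod, hnot⟩
    push Not at hnot
    obtain ⟨hq0, hnB⟩ := hnot
    obtain ⟨b, rfl⟩ : ∃ b, q = b + 1 := ⟨q - 1, by omega⟩
    exact ⟨b, ⟨by omega, Nat.ModEq.add_right_cancel' 1 hmod, fun hb => hnB b hb rfl⟩, rfl⟩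
  · rintro ⟨b, ⟨hb, hmod, hnB⟩, rfl⟩
    refine ⟨by omega, Nat.ModEq.add_right 1 hmod, ?_⟩
    rintro (h0 | ⟨a, ha, hab⟩)
    · omega
    · exact hnB (add_right_cancel hab ▸ ha)

lemma inducedSeq_insert_zero_image_succ (e : ℕ) (B : Finset ℕ) :
    inducedSeq e (insert 0 (B.image (· + 1))) = (inducedSeq e B).map (· + 1) := by
  have h0 : (0 : ℕ) ∉ B.image (· + 1) := by simp
  have hw0 : beadWeight e (insert 0 (B.image (· + 1))) 0 = 0 := by simp [beadWeight]
  unfold inducedSeq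
  rw [insert_val_of_notMem h0, image_val,
    Multiset.dedup_eq_self.mpr (B.nodup.map (add_left_injective 1)),
    Multiset.cons_bind, Multiset.bind_map, Multiset.map_bind, hw0]
  simp only [Multiset.range_zero, Multiset.map_zero, zero_add]
  refine Multiset.bind_congr fun p _ => ?_
  rw [beadWeight_insert_zero_image_succ, Multiset.map_map]
  refine Multiset.map_congr rfl fun m hm => ?_
  have hmp : m * e ≤ p :=
    (Nat.mul_le_mul_right e ((Multiset.mem_range.mp hm).le.trans (beadWeight_le_div e B p))).trans
      (Nat.div_mul_le_self p e)
  simp only [Function.comp_apply]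
  omega

namespace AbacusPartition

lemma betaSet_succ (lam : AbacusPartition) {r : ℕ} (h : lam.len ≤ r) :
    lam.betaSet (r + 1) = insert 0 ((lam.betaSet r).image (· + 1)) := by
  ext x
  simp only [betaSet, mem_insert, mem_image, mem_range]
  constructor
  · rintro ⟨i, hi, rfl⟩
    rcases Nat.lt_or_ge i r with hir | hir
    · exact Or.inr ⟨lam.parts i + (r - 1 - i), ⟨i, hir, rfl⟩, by omega⟩
    · have := lam.zero_of_ge i (by omega)
      omega
  · rintro (rfl | ⟨a, ⟨i, hi, rfl⟩, rfl⟩)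
    · exact ⟨r, by omega, by rw [lam.zero_of_ge r h]; omega⟩
    · exact ⟨i, by omega, by omega⟩

lemma inducedSeq_betaSet_add (e : ℕ) (lam : AbacusPartition) {r : ℕ} (h : lam.len ≤ r) (k : ℕ) :
    inducedSeq e (lam.betaSet (r + k)) = (inducedSeq e (lam.betaSet r)).map (· + k) := by
  induction k with
  | zero => simp
  | succ k ih =>
    rw [← add_assoc, betaSet_succ lam (by omega), inducedSeq_insert_zero_image_succ, ih,
      Multiset.map_map]
    rfl

lemma sum_range_parts_of_len_le (lam : AbacusPartition) {m n : ℕ} (h : lam.len ≤ n)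
    (hnm : n ≤ m) : ∑ i ∈ range m, lam.parts i = ∑ i ∈ range n, lam.parts i :=
  (sum_subset (range_subset_range.mpr hnm)
    fun i _ hi => lam.zero_of_ge i (by simp at hi; omega)).symm

end AbacusPartition

lemma sort_coe_eq_of_perm {α : Type*} [LinearOrder α] {l l' : List α} (h : l.Perm l')
    (hl' : l'.Pairwise (· ≤ ·)) : (l : Multiset α).sort (· ≤ ·) = l' := by
  rw [Multiset.coe_eq_coe.mpr h, Multiset.coe_sort, List.mergeSort_eq_self _ hl']

lemma sort_map_add (s : Multiset ℕ) (k : ℕ) :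
    (s.map (· + k)).sort (· ≤ ·) = (s.sort (· ≤ ·)).map (· + k) :=
  (Multiset.map_sort (· + k) s (· ≤ ·) (· ≤ ·) fun _ _ _ _ => (add_le_add_iff_right k).symm).symm

lemma forall₂_sort_inducedSeq_add_iff (e : ℕ) (lam mu : AbacusPartition) {r : ℕ}
    (hlam : lam.len ≤ r) (hmu : mu.len ≤ r) (k : ℕ) :
    List.Forall₂ (· ≤ ·) ((inducedSeq e (lam.betaSet (r + k))).sort (· ≤ ·))
        ((inducedSeq e (mu.betaSet (r + k))).sort (· ≤ ·)) ↔
      List.Forall₂ (· ≤ ·) ((inducedSeq e (lam.betaSet r)).sort (· ≤ ·))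
        ((inducedSeq e (mu.betaSet r)).sort (· ≤ ·)) := by
  rw [lam.inducedSeq_betaSet_add e hlam, mu.inducedSeq_betaSet_add e hmu, sort_map_add,
    sort_map_add, List.forall₂_map_left_iff, List.forall₂_map_right_iff]
  simp only [add_le_add_iff_right]

lemma not_prodLE_of_not_forall₂ (e : ℕ) (lam mu : AbacusPartition) {r : ℕ}
    (hlam : lam.len ≤ r) (hmu : mu.len ≤ r)
    (h : ¬ List.Forall₂ (· ≤ ·) ((inducedSeq e (lam.betaSet r)).sort (· ≤ ·))
        ((inducedSeq e (mu.betaSet r)).sort (· ≤ ·))) :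
    ¬ ProdLE e lam mu := by
  rintro ⟨-, -, r0, hr0⟩
  exact h ((forall₂_sort_inducedSeq_add_iff e lam mu hlam hmu r0).mp (hr0 _ (by omega)))

/-- for `e = 5`, `λ = (10,6,5,2,1,1)` and `μ = (15,3,3,2,2)` have the
same 5-core and 5-weight 5, induced 5-sequences `(19,14,14,12,9)` and
`(24,19,14,11,10)` with 10 beads, `μ` strictly dominates `λ`, yet the componentwise
inequality of induced sequences fails and `μ` is not greater than `λ` in the
product order. -/
theorem stmt19 (lam mu : AbacusPartition)
    (hlam : lam.parts = fun i => [10, 6, 5, 2, 1, 1].getD i 0) (hlamlen : lam.len = 6)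
    (hmu : mu.parts = fun i => [15, 3, 3, 2, 2].getD i 0) (hmulen : mu.len = 5) :
    coreBeta 5 (lam.betaSet 10) = coreBeta 5 (mu.betaSet 10) ∧
    eWeight 5 lam = 5 ∧ eWeight 5 mu = 5 ∧
    inducedSeq 5 (lam.betaSet 10) = (↑[19, 14, 14, 12, 9] : Multiset ℕ) ∧
    inducedSeq 5 (mu.betaSet 10) = (↑[24, 19, 14, 11, 10] : Multiset ℕ) ∧
    (∀ m, (Finset.range m).sum lam.parts ≤ (Finset.range m).sum mu.parts) ∧
    lam.parts ≠ mu.parts ∧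
    ¬ List.Forall₂ (· ≤ ·) ((inducedSeq 5 (lam.betaSet 10)).sort (· ≤ ·))
        ((inducedSeq 5 (mu.betaSet 10)).sort (· ≤ ·)) ∧
    ¬ ProdLE 5 lam mu := by
  have hseq_lam : inducedSeq 5 (lam.betaSet 10) = (↑[19, 14, 14, 12, 9] : Multiset ℕ) := by
    simp only [inducedSeq, AbacusPartition.betaSet, hlam]; decide
  have hseq_mu : inducedSeq 5 (mu.betaSet 10) = (↑[24, 19, 14, 11, 10] : Multiset ℕ) := by
    simp only [inducedSeq, AbacusPartition.betaSet, hmu]; decide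
  have hsort_lam : (inducedSeq 5 (lam.betaSet 10)).sort (· ≤ ·) = [9, 12, 14, 14, 19] := by
    rw [hseq_lam]; exact sort_coe_eq_of_perm (by decide) (by decide)
  have hsort_mu : (inducedSeq 5 (mu.betaSet 10)).sort (· ≤ ·) = [10, 11, 14, 19, 24] := by
    rw [hseq_mu]; exact sort_coe_eq_of_perm (by decide) (by decide)
  have hnot : ¬ List.Forall₂ (· ≤ ·) ((inducedSeq 5 (lam.betaSet 10)).sort (· ≤ ·))
      ((inducedSeq 5 (mu.betaSet 10)).sort (· ≤ ·)) := by
    rw [hsort_lam, hsort_mu]; decide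
  have hdom : ∀ m, ∑ i ∈ range m, lam.parts i ≤ ∑ i ∈ range m, mu.parts i := by
    intro m
    rcases le_or_gt m 6 with hm | hm
    · interval_cases m <;> rw [hlam, hmu] <;> decide
    · rw [lam.sum_range_parts_of_len_le hlamlen.le hm.le,
        mu.sum_range_parts_of_len_le (by omega) hm.le, hlam, hmu]
      decide
  refine ⟨?_, ?_, ?_, hseq_lam, hseq_mu, hdom, fun h => ?_, hnot,
    not_prodLE_of_not_forall₂ 5 lam mu (by omega) (by omega) hnot⟩
  · simp only [coreBeta, runnerCount, AbacusPartition.betaSet, hlam, hmu]; decide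
  · simp only [eWeight, abacusWeight, beadWeight, AbacusPartition.betaSet, hlam, hlamlen]; decide
  · simp only [eWeight, abacusWeight, beadWeight, AbacusPartition.betaSet, hmu, hmulen]; decide
  · exact absurd (congrFun h 0) (by rw [hlam, hmu]; decide)
end
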